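/- arXiv:1508.04988 — 6 statements merged into one kernel-verified Lean document; each statement's English description precedes it below -/
import Mathlib

section
/- Let Q ⊂ ℝⁿ be a cube with side length ℓ(Q), let t ∈ ℝ, and let u : ℝⁿ × ℝ → ℂ be a function such that for every ball B(X,2r) contained in the slab 2Q × (t−ℓ(Q), t+ℓ(Q)) one has the Caccioppoli-type inequality ⨍_{B(X,r)} |∂_s u(x,s)|² dx ds ≤ (c₀/r²) ⨍_{B(X,2r)} |u(x,s)|² dx ds. Then ∫_Q |u(x,t)|² dx ≤ C(c₀,n) ℓ(Q)^{-1} ∫_{2Q} ∫_{t−ℓ(Q)}^{t+ℓ(Q)} |u(x,s)|² ds dx. -/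
/-!
On each vertical line the fundamental theorem of calculus bounds `‖u (x, t)‖` by `‖u (x, s)‖` plus
the `L¹` norm of `∂ₛu` over an interval of length `ℓ` around `t`; squaring, integrating in `s` and
applying Cauchy–Schwarz gives `ℓ ‖u (x, t)‖² ≤ 2 ∫ ‖u‖² + 2 ℓ² ∫ ‖∂ₛu‖²`. After integration over
the half-size cube, the `∂ₛu` term is an integral over the ball of radius `ℓ / 2` around `(c, t)`
(balls of the sup metric on `(Fin n → ℝ) × ℝ` are cubes), and one application of the Caccioppoli
inequality bounds it by `4 c₀ / ℓ²` times the integral of `‖u‖²` over the slab.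
-/

open MeasureTheory Set Metric

theorem sq_setIntegral_le_measureReal_mul_setIntegral_sq {α : Type*} [MeasurableSpace α]
    {μ : Measure α} {s : Set α} (hs : μ s ≠ ⊤) {g : α → ℝ} (hg : IntegrableOn g s μ)
    (hg2 : IntegrableOn (fun x => g x ^ 2) s μ) :
    (∫ x in s, g x ∂μ) ^ 2 ≤ μ.real s * ∫ x in s, g x ^ 2 ∂μ := by
  rcases eq_or_ne (μ s) 0 with h0 | h0
  · simp [Measure.restrict_eq_zero.2 h0]
  have hm : 0 < μ.real s := ENNReal.toReal_pos h0 hs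
  have jensen := (even_two.convexOn_pow (𝕜 := ℝ)).map_set_average_le
    (continuous_pow 2).continuousOn isClosed_univ h0 hs (by simp) hg hg2
  rw [setAverage_eq, setAverage_eq, smul_eq_mul, smul_eq_mul, mul_pow, inv_pow,
    sq (μ.real s), mul_inv, mul_assoc, mul_le_mul_iff_right₀ (inv_pos.2 hm),
    inv_mul_le_iff₀ hm] at jensen
  exact jensen

theorem norm_sub_le_setIntegral_norm_of_hasDerivAt {E : Type*} [NormedAddCommGroup E]
    [NormedSpace ℝ E] [CompleteSpace E] {f f' : ℝ → E} {a b s t : ℝ}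
    (hf : ∀ x ∈ Ioo a b, HasDerivAt f (f' x) x) (hf' : IntegrableOn f' (Ioo a b))
    (hs : s ∈ Ioo a b) (ht : t ∈ Ioo a b) :
    ‖f t - f s‖ ≤ ∫ x in Ioo a b, ‖f' x‖ := by
  have hsub : uIcc s t ⊆ Ioo a b := ordConnected_Ioo.uIcc_subset hs ht
  have hsub' : uIoc s t ⊆ Ioo a b := uIoc_subset_uIcc.trans hsub
  rw [← intervalIntegral.integral_eq_sub_of_hasDerivAt (fun x hx => hf x (hsub hx))
    (intervalIntegrable_iff.2 (hf'.mono_set hsub'))]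
  exact intervalIntegral.norm_integral_le_integral_norm_uIoc.trans
    (setIntegral_mono_set hf'.norm (ae_of_all _ fun _ => norm_nonneg _) hsub'.eventuallyLE)

theorem mul_sq_norm_le_of_hasDerivAt {E : Type*} [NormedAddCommGroup E]
    [NormedSpace ℝ E] [CompleteSpace E] {f f' : ℝ → E} {a b t : ℝ} (ht : t ∈ Ioo a b)
    (hf : ∀ x ∈ Ioo a b, HasDerivAt f (f' x) x)
    (hf2 : IntegrableOn (fun x => ‖f x‖ ^ 2) (Ioo a b))
    (hf'2 : IntegrableOn (fun x => ‖f' x‖ ^ 2) (Ioo a b)) :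
    (b - a) * ‖f t‖ ^ 2 ≤
      2 * (∫ x in Ioo a b, ‖f x‖ ^ 2) + 2 * (b - a) ^ 2 * ∫ x in Ioo a b, ‖f' x‖ ^ 2 := by
  have hab : a ≤ b := (ht.1.trans ht.2).le
  have hvol : volume.real (Ioo a b) = b - a := Real.volume_real_Ioo_of_le hab
  have hf'meas : AEStronglyMeasurable f' (volume.restrict (Ioo a b)) :=
    (stronglyMeasurable_deriv f).aestronglyMeasurable.congr
      ((ae_restrict_mem measurableSet_Ioo).mono fun x hx => (hf x hx).deriv)
  have hf' : IntegrableOn f' (Ioo a b) :=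
    ((memLp_two_iff_integrable_sq_norm hf'meas).2 hf'2).integrable one_le_two
  set B := ∫ x in Ioo a b, ‖f' x‖
  have hB : B ^ 2 ≤ (b - a) * ∫ x in Ioo a b, ‖f' x‖ ^ 2 :=
    hvol ▸ sq_setIntegral_le_measureReal_mul_setIntegral_sq measure_Ioo_lt_top.ne hf'.norm hf'2
  have hpt : ∀ s ∈ Ioo a b, ‖f t‖ ^ 2 ≤ 2 * ‖f s‖ ^ 2 + 2 * B ^ 2 := by
    intro s hs
    have htri := norm_le_norm_add_norm_sub' (f t) (f s)
    have hvar := norm_sub_le_setIntegral_norm_of_hasDerivAt hf hf' hs ht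
    nlinarith [sq_nonneg (‖f s‖ - B), norm_nonneg (f t)]
  have hint : ∫ _ in Ioo a b, ‖f t‖ ^ 2 ≤ ∫ s in Ioo a b, (2 * ‖f s‖ ^ 2 + 2 * B ^ 2) :=
    setIntegral_mono_on (integrable_const _) ((hf2.const_mul 2).add (integrable_const _))
      measurableSet_Ioo hpt
  rw [setIntegral_const, integral_add (hf2.const_mul 2) (integrable_const _),
    integral_const_mul, setIntegral_const, hvol, smul_eq_mul, smul_eq_mul] at hint
  linear_combination hint + 2 * mul_le_mul_of_nonneg_left hB (sub_nonneg.2 hab)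

theorem mul_setIntegral_sq_norm_slice_le {α E : Type*} [MeasurableSpace α] {μ : Measure α}
    [SFinite μ] [NormedAddCommGroup E] [NormedSpace ℝ E] [CompleteSpace E] {S : Set α}
    (hS : MeasurableSet S) {u v : α × ℝ → E} {a b t : ℝ} (ht : t ∈ Ioo a b)
    (huv : ∀ x ∈ S, ∀ s ∈ Ioo a b, HasDerivAt (fun s => u (x, s)) (v (x, s)) s)
    (hu : IntegrableOn (fun p => ‖u p‖ ^ 2) (S ×ˢ Ioo a b) (μ.prod volume))
    (hv : IntegrableOn (fun p => ‖v p‖ ^ 2) (S ×ˢ Ioo a b) (μ.prod volume)) :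
    (b - a) * ∫ x in S, ‖u (x, t)‖ ^ 2 ∂μ ≤
      2 * (∫ p in S ×ˢ Ioo a b, ‖u p‖ ^ 2 ∂μ.prod volume) +
        2 * (b - a) ^ 2 * ∫ p in S ×ˢ Ioo a b, ‖v p‖ ^ 2 ∂μ.prod volume := by
  have hu' : Integrable (fun p => ‖u p‖ ^ 2) ((μ.restrict S).prod (volume.restrict (Ioo a b))) := by
    rwa [Measure.prod_restrict]
  have hv' : Integrable (fun p => ‖v p‖ ^ 2) ((μ.restrict S).prod (volume.restrict (Ioo a b))) := by
    rwa [Measure.prod_restrict]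
  have hUint := (hu'.integral_prod_left.const_mul 2)
  have hVint := (hv'.integral_prod_left.const_mul (2 * (b - a) ^ 2))
  rw [setIntegral_prod _ hu, setIntegral_prod _ hv, ← integral_const_mul, ← integral_const_mul,
    ← integral_const_mul, ← integral_add hUint hVint]
  refine integral_mono_of_nonneg (ae_of_all _ fun x => ?_) (hUint.add hVint) ?_
  · have := ht.1.trans ht.2
    positivity
  filter_upwards [ae_restrict_mem hS, hu'.prod_right_ae, hv'.prod_right_ae] with x hx hux hvx
  exact mul_sq_norm_le_of_hasDerivAt ht (huv x hx) hux hvx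

theorem setIntegral_le_mul_setIntegral_of_setAverage_le {α : Type*} [MeasurableSpace α]
    {μ : Measure α} {s s' : Set α} {f g : α → ℝ} {K : ℝ} (hss' : s ⊆ s') (hs' : μ s' ≠ ⊤)
    (hK : 0 ≤ K) (hg : 0 ≤ᵐ[μ.restrict s'] g)
    (h : ⨍ x in s, f x ∂μ ≤ K * ⨍ x in s', g x ∂μ) :
    ∫ x in s, f x ∂μ ≤ K * ∫ x in s', g x ∂μ := by
  have hgs' : 0 ≤ ∫ x in s', g x ∂μ := integral_nonneg_of_ae hg
  rcases eq_or_ne (μ s) 0 with h0 | h0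
  · simpa [Measure.restrict_eq_zero.2 h0] using mul_nonneg hK hgs'
  have hm : 0 < μ.real s := ENNReal.toReal_pos h0 (ne_top_of_le_ne_top hs' (measure_mono hss'))
  have hmm' : μ.real s ≤ μ.real s' := measureReal_mono hss' hs'
  rw [setAverage_eq, setAverage_eq, smul_eq_mul, smul_eq_mul, inv_mul_le_iff₀ hm] at h
  calc ∫ x in s, f x ∂μ ≤ μ.real s * (K * ((μ.real s')⁻¹ * ∫ x in s', g x ∂μ)) := h
    _ = K * (μ.real s / μ.real s') * ∫ x in s', g x ∂μ := by ring
    _ ≤ K * 1 * ∫ x in s', g x ∂μ := by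
        gcongr
        exact div_le_one_of_le₀ hmm' (hm.le.trans hmm')
    _ = K * ∫ x in s', g x ∂μ := by rw [mul_one]

theorem MeasureTheory.Measure.closedBall_ae_eq_ball {E : Type*} [NormedAddCommGroup E]
    [NormedSpace ℝ E] [MeasurableSpace E] [BorelSpace E] [FiniteDimensional ℝ E] [Nontrivial E]
    (μ : Measure E) [μ.IsAddHaarMeasure] (x : E) (r : ℝ) : closedBall x r =ᵐ[μ] ball x r :=
  closedBall_sdiff_sphere (x := x) (ε := r) ▸ (sdiff_null_ae_eq_self (μ.addHaar_sphere x r)).symm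

theorem setIntegral_closedBall_le_of_setAverage_ball_le {E : Type*} [NormedAddCommGroup E]
    [NormedSpace ℝ E] [MeasurableSpace E] [BorelSpace E] [FiniteDimensional ℝ E] [Nontrivial E]
    (μ : Measure E) [μ.IsAddHaarMeasure] {f g : E → ℝ} {x : E} {r K : ℝ} (hr : 0 ≤ r)
    (hK : 0 ≤ K) (hf : ∀ y, 0 ≤ f y)
    (h : ⨍ y in ball x r, g y ∂μ ≤ K * ⨍ y in ball x (2 * r), f y ∂μ) :
    ∫ y in closedBall x r, g y ∂μ ≤ K * ∫ y in ball x (2 * r), f y ∂μ := by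
  rw [setIntegral_congr_set (μ.closedBall_ae_eq_ball x r)]
  exact setIntegral_le_mul_setIntegral_of_setAverage_le (ball_subset_ball (by linarith))
    measure_ball_lt_top.ne hK (ae_of_all _ hf) h

theorem setOf_forall_abs_sub_le_eq_closedBall {ι : Type*} [Fintype ι] (c : ι → ℝ) {r : ℝ}
    (hr : 0 ≤ r) : {x : ι → ℝ | ∀ i, |x i - c i| ≤ r} = closedBall c r := by
  ext x
  simp only [mem_ofPred_eq, mem_closedBall, dist_pi_le_iff hr, Real.dist_eq]

/-- If `u` satisfies a Caccioppoli-type inequality for its vertical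
derivative `v = ∂ₛ u` in every ball contained in the slab `2Q × (t - ℓ(Q), t + ℓ(Q))`,
then the L² norm of `u` on the horizontal slice `Q × {t}` is controlled by its L² norm
on the slab.  The cube `Q` has center `c` and side length `L`. -/
theorem stmt_0 (n : ℕ) (c₀ : ℝ) (hc₀ : 0 < c₀) :
    ∃ C : ℝ, 0 < C ∧
      ∀ (c : Fin n → ℝ) (L t : ℝ), 0 < L →
      ∀ u v : (Fin n → ℝ) × ℝ → ℂ,
        (∀ p : (Fin n → ℝ) × ℝ, HasDerivAt (fun s => u (p.1, s)) (v p) p.2) →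
        IntegrableOn (fun p => ‖u p‖ ^ 2)
          ({x : Fin n → ℝ | ∀ i, |x i - c i| ≤ L} ×ˢ Set.Ioo (t - L) (t + L)) volume →
        IntegrableOn (fun p => ‖v p‖ ^ 2)
          ({x : Fin n → ℝ | ∀ i, |x i - c i| ≤ L} ×ˢ Set.Ioo (t - L) (t + L)) volume →
        (∀ (X : (Fin n → ℝ) × ℝ) (r : ℝ), 0 < r →
          Metric.ball X (2 * r) ⊆
            {x : Fin n → ℝ | ∀ i, |x i - c i| ≤ L} ×ˢ Set.Ioo (t - L) (t + L) →
          (⨍ p in Metric.ball X r, ‖v p‖ ^ 2) ≤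
            c₀ / r ^ 2 * ⨍ p in Metric.ball X (2 * r), ‖u p‖ ^ 2) →
        (∫ x in {x : Fin n → ℝ | ∀ i, |x i - c i| ≤ L / 2}, ‖u (x, t)‖ ^ 2) ≤
          C / L * ∫ x in {x : Fin n → ℝ | ∀ i, |x i - c i| ≤ L},
            ∫ s in Set.Ioo (t - L) (t + L), ‖u (x, s)‖ ^ 2 := by
  refine ⟨2 + 8 * c₀, by positivity, fun c L t hL u v hderiv hu hv hcacc => ?_⟩
  rw [setOf_forall_abs_sub_le_eq_closedBall c hL.le] at hu hv hcacc ⊢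
  rw [setOf_forall_abs_sub_le_eq_closedBall c (half_pos hL).le, ← setIntegral_prod _ hu]
  set Q := closedBall c L ×ˢ Ioo (t - L) (t + L)
  set Q' := closedBall c (L / 2) ×ˢ Ioo (t - L / 2) (t + L / 2)
  have hQ'Q : Q' ⊆ Q := prod_mono (closedBall_subset_closedBall (by linarith))
    (Ioo_subset_Ioo (by linarith) (by linarith))
  have hQ'_ball : Q' ⊆ closedBall (c, t) (L / 2) := by
    rw [← closedBall_prod_same, Real.closedBall_eq_Icc]
    exact prod_mono subset_rfl Ioo_subset_Icc_self
  have hball_Q : ball (c, t) L ⊆ Q := by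
    rw [← ball_prod_same, Real.ball_eq_Ioo]
    exact prod_mono ball_subset_closedBall subset_rfl
  have hslice := mul_setIntegral_sq_norm_slice_le (μ := volume) measurableSet_closedBall
    (a := t - L / 2) (b := t + L / 2) (t := t) ⟨by linarith, by linarith⟩
    (fun x _ s _ => hderiv (x, s))
    (hu.mono_set hQ'Q) (hv.mono_set hQ'Q)
  rw [show t + L / 2 - (t - L / 2) = L by ring] at hslice
  have hu_le : ∫ p in Q', ‖u p‖ ^ 2 ≤ ∫ p in Q, ‖u p‖ ^ 2 :=
    setIntegral_mono_set hu (ae_of_all _ fun _ => by positivity) hQ'Q.eventuallyLE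
  have hv_le : ∫ p in Q', ‖v p‖ ^ 2 ≤ 4 * c₀ / L ^ 2 * ∫ p in Q, ‖u p‖ ^ 2 := by
    have hcacc' := hcacc (c, t) (L / 2) (half_pos hL) (by rwa [mul_div_cancel₀ _ two_ne_zero])
    calc ∫ p in Q', ‖v p‖ ^ 2 ≤ ∫ p in closedBall (c, t) (L / 2), ‖v p‖ ^ 2 :=
          setIntegral_mono_set (hv.mono_set ((closedBall_subset_ball (by linarith)).trans hball_Q))
            (ae_of_all _ fun _ => by positivity) hQ'_ball.eventuallyLE
      _ ≤ c₀ / (L / 2) ^ 2 * ∫ p in ball (c, t) (2 * (L / 2)), ‖u p‖ ^ 2 :=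
          setIntegral_closedBall_le_of_setAverage_ball_le
            ((volume : Measure (Fin n → ℝ)).prod volume) (half_pos hL).le (by positivity) (fun _ => by positivity) hcacc'
      _ ≤ 4 * c₀ / L ^ 2 * ∫ p in Q, ‖u p‖ ^ 2 := by
          rw [show c₀ / (L / 2) ^ 2 = 4 * c₀ / L ^ 2 by ring, mul_div_cancel₀ _ two_ne_zero]
          exact mul_le_mul_of_nonneg_left (setIntegral_mono_set hu
            (ae_of_all _ fun _ => by positivity) hball_Q.eventuallyLE) (by positivity)
  rw [div_mul_eq_mul_div, le_div_iff₀ hL]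
  calc (∫ x in closedBall c (L / 2), ‖u (x, t)‖ ^ 2) * L
      ≤ 2 * (∫ p in Q', ‖u p‖ ^ 2) + 2 * L ^ 2 * ∫ p in Q', ‖v p‖ ^ 2 := by
        rw [mul_comm]; exact hslice
    _ ≤ 2 * (∫ p in Q, ‖u p‖ ^ 2) + 2 * L ^ 2 * (4 * c₀ / L ^ 2 * ∫ p in Q, ‖u p‖ ^ 2) := by
        gcongr
    _ = (2 + 8 * c₀) * ∫ p in Q, ‖u p‖ ^ 2 := by
        field_simp
        ring
end

section
/- Fix an integer j ≥ 1 and suppose U_j, U_{j+1} : (0,∞) → [0,∞) are continuous with U_j differentiable, U_j(t) ≤ C₀ t^{-1-2j} for all t > 0, and |U_j'(s)| ≤ 2√(U_j(s) U_{j+1}(s)) for all s > 0. Then there is a constant C depending only on j such that ∫₀^∞ t^{2j−1} U_j(t) dt ≤ C ∫₀^∞ s^{2j+1} U_{j+1}(s) ds. -/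
/-!
Integrate `(t^{2j} U)' = 2j t^{2j-1} U + t^{2j} U'` over `[ε, S]`. By AM-GM,
`|U'| ≤ 2√(UV) ≤ (j/t) U + (t/j) V`, so the derivative is bounded below by
`j t^{2j-1} U - j⁻¹ t^{2j+1} V`, and the boundary term `S^{2j} U(S)` is at most `C₀/S`. Hence
`j ∫_ε^S t^{2j-1} U ≤ C₀/S + j⁻¹ ∫_ε^S t^{2j+1} V`, and letting `ε → 0`, `S → ∞` gives the claim
with `C = j⁻²`. Only a lower bound for the derivative enters, through the one-sided fundamental
theorem of calculus, so no integrability of `U'` is needed.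
-/

open MeasureTheory Set Filter Topology
open scoped ENNReal

theorem two_sqrt_mul_le_mul_add_div {a b r : ℝ} (ha : 0 ≤ a) (hb : 0 ≤ b) (hr : 0 < r) :
    2 * √(a * b) ≤ r * a + b / r := by
  have hra : 0 ≤ r * a := by positivity
  have hbr : 0 ≤ b / r := by positivity
  have hsplit : √(a * b) = √(r * a) * √(b / r) := by
    rw [← Real.sqrt_mul hra]
    congr 1
    field_simp
  rw [hsplit]
  nlinarith [sq_nonneg (√(r * a) - √(b / r)), Real.sq_sqrt hra, Real.sq_sqrt hbr]

theorem sub_le_deriv_pow_mul_of_abs_le_two_sqrt {p : ℕ} (hp : 1 ≤ p) {c t u v u' : ℝ}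
    (hc : 0 < c) (ht : 0 < t) (hu : 0 ≤ u) (hv : 0 ≤ v) (hu' : |u'| ≤ 2 * √(u * v)) :
    (p - c) * (t ^ (p - 1) * u) - c⁻¹ * (t ^ (p + 1) * v) ≤ p * t ^ (p - 1) * u + t ^ p * u' := by
  obtain ⟨q, rfl⟩ : ∃ q, p = q + 1 := ⟨p - 1, by omega⟩
  have hamgm : |u'| ≤ c / t * u + v / (c / t) :=
    hu'.trans (two_sqrt_mul_le_mul_add_div hu hv (by positivity))
  have hw : 0 < t ^ q * t := by positivity
  have hscaled : t ^ q * t * |u'| ≤ c * (t ^ q * u) + c⁻¹ * (t ^ q * t * t * v) := by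
    calc t ^ q * t * |u'| ≤ t ^ q * t * (c / t * u + v / (c / t)) := by gcongr
      _ = c * (t ^ q * u) + c⁻¹ * (t ^ q * t * t * v) := by field_simp
  simp only [Nat.add_sub_cancel, pow_succ, Nat.cast_add, Nat.cast_one]
  linarith [mul_le_mul_of_nonneg_left (neg_abs_le u') hw.le]

theorem integral_sub_integral_le_of_abs_deriv_le_two_sqrt {U U' V : ℝ → ℝ} {p : ℕ} (hp : 1 ≤ p)
    {c ε S : ℝ} (hc : 0 < c) (hε : 0 < ε) (hεS : ε ≤ S)
    (hU : ∀ t ∈ Icc ε S, HasDerivAt U (U' t) t) (hV : ContinuousOn V (Icc ε S))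
    (hU0 : ∀ t ∈ Icc ε S, 0 ≤ U t) (hV0 : ∀ t ∈ Icc ε S, 0 ≤ V t)
    (hU' : ∀ t ∈ Icc ε S, |U' t| ≤ 2 * √(U t * V t)) :
    (p - c) * (∫ t in ε..S, t ^ (p - 1) * U t) - c⁻¹ * ∫ t in ε..S, t ^ (p + 1) * V t ≤
      S ^ p * U S - ε ^ p * U ε := by
  have hUc : ContinuousOn U (Icc ε S) := fun t ht => (hU t ht).continuousAt.continuousWithinAt
  have hUint : IntervalIntegrable (fun t => t ^ (p - 1) * U t) volume ε S :=
    ((continuous_pow _).continuousOn.mul hUc).intervalIntegrable_of_Icc hεS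
  have hVint : IntervalIntegrable (fun t => t ^ (p + 1) * V t) volume ε S :=
    ((continuous_pow _).continuousOn.mul hV).intervalIntegrable_of_Icc hεS
  rw [← intervalIntegral.integral_const_mul, ← intervalIntegral.integral_const_mul,
    ← intervalIntegral.integral_sub (hUint.const_mul _) (hVint.const_mul _)]
  refine intervalIntegral.integral_le_sub_of_hasDeriv_right_of_le hεS
    ((continuous_pow p).continuousOn.mul hUc)
    (fun t ht => ((hasDerivAt_pow p t).mul (hU t (Ioo_subset_Icc_self ht))).hasDerivWithinAt)
    ?_ fun t ht => ?_
  · exact ContinuousOn.integrableOn_Icc (by fun_prop)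
  · have ht' := Ioo_subset_Icc_self ht
    exact sub_le_deriv_pow_mul_of_abs_le_two_sqrt hp hc (hε.trans ht.1) (hU0 t ht')
      (hV0 t ht') (hU' t ht')

theorem pow_mul_le_div_of_le_mul_rpow {p : ℕ} {C₀ t u : ℝ} (ht : 0 < t)
    (hu : u ≤ C₀ * t ^ ((-1 : ℝ) - p)) : t ^ p * u ≤ C₀ / t := by
  calc t ^ p * u ≤ t ^ p * (C₀ * t ^ ((-1 : ℝ) - p)) := by gcongr
    _ = C₀ / t := by
      rw [mul_left_comm, ← Real.rpow_natCast, ← Real.rpow_add ht, add_sub_cancel,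
        Real.rpow_neg_one, div_eq_mul_inv]

theorem ofReal_intervalIntegral_eq_setLIntegral_Ioc {f : ℝ → ℝ} {a b : ℝ} (hab : a ≤ b)
    (hf : IntervalIntegrable f volume a b) (h0 : ∀ t ∈ Ioc a b, 0 ≤ f t) :
    ENNReal.ofReal (∫ t in a..b, f t) = ∫⁻ t in Ioc a b, ENNReal.ofReal (f t) := by
  rw [intervalIntegral.integral_of_le hab,
    ofReal_integral_eq_lintegral_ofReal ((intervalIntegrable_iff_integrableOn_Ioc_of_le hab).1 hf)
      ((ae_restrict_iff' measurableSet_Ioc).2 (ae_of_all _ h0))]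

theorem setLIntegral_Ioc_pow_mul_le_of_abs_deriv_le_two_sqrt {U U' V : ℝ → ℝ} {k : ℕ}
    (hk : 1 ≤ k) {ε S K : ℝ} (hε : 0 < ε) (hεS : ε ≤ S)
    (hU : ∀ t ∈ Icc ε S, HasDerivAt U (U' t) t) (hV : ContinuousOn V (Icc ε S))
    (hU0 : ∀ t ∈ Icc ε S, 0 ≤ U t) (hV0 : ∀ t ∈ Icc ε S, 0 ≤ V t)
    (hU' : ∀ t ∈ Icc ε S, |U' t| ≤ 2 * √(U t * V t)) (hUS : S ^ (2 * k) * U S ≤ K) :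
    ∫⁻ t in Ioc ε S, ENNReal.ofReal (t ^ (2 * k - 1) * U t) ≤
      ENNReal.ofReal (K / k) +
        ENNReal.ofReal ((k : ℝ) ^ 2)⁻¹ * ∫⁻ t in Ioc ε S, ENNReal.ofReal (t ^ (2 * k + 1) * V t) := by
  have hk₀ : (0 : ℝ) < k := by exact_mod_cast hk
  have hUc : ContinuousOn U (Icc ε S) := fun t ht => (hU t ht).continuousAt.continuousWithinAt
  set A := ∫ t in ε..S, t ^ (2 * k - 1) * U t
  set B := ∫ t in ε..S, t ^ (2 * k + 1) * V t
  -- The AM-GM weight `c = k` is half the exponent `p = 2k`, which maximises `(p - c) c`.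
  have hkA : k * A ≤ K + (k : ℝ)⁻¹ * B := by
    have henergy := integral_sub_integral_le_of_abs_deriv_le_two_sqrt (p := 2 * k) (by omega)
      hk₀ hε hεS hU hV hU0 hV0 hU'
    have hε₀ : 0 ≤ ε ^ (2 * k) * U ε := mul_nonneg (by positivity) (hU0 ε (left_mem_Icc.2 hεS))
    push_cast at henergy
    linarith
  have hAB : A ≤ K / k + ((k : ℝ) ^ 2)⁻¹ * B := by
    calc A = (k : ℝ)⁻¹ * (k * A) := by field_simp
      _ ≤ (k : ℝ)⁻¹ * (K + (k : ℝ)⁻¹ * B) := by gcongr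
      _ = K / k + ((k : ℝ) ^ 2)⁻¹ * B := by ring
  rw [← ofReal_intervalIntegral_eq_setLIntegral_Ioc (f := fun t => t ^ (2 * k - 1) * U t) hεS
      (((continuous_pow _).continuousOn.mul hUc).intervalIntegrable_of_Icc hεS)
      fun t ht => mul_nonneg (pow_nonneg (hε.trans ht.1).le _) (hU0 t (Ioc_subset_Icc_self ht)),
    ← ofReal_intervalIntegral_eq_setLIntegral_Ioc (f := fun t => t ^ (2 * k + 1) * V t) hεS
      (((continuous_pow _).continuousOn.mul hV).intervalIntegrable_of_Icc hεS)
      fun t ht => mul_nonneg (pow_nonneg (hε.trans ht.1).le _) (hV0 t (Ioc_subset_Icc_self ht)),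
    ← ENNReal.ofReal_mul (by positivity)]
  exact (ENNReal.ofReal_le_ofReal hAB).trans ENNReal.ofReal_add_le

theorem setLIntegral_Ioi_zero_le_of_forall_Ioc {f : ℝ → ℝ≥0∞}
    (hf : AEMeasurable f (volume.restrict (Ioi 0))) {K : ℝ} {R : ℝ≥0∞}
    (h : ∀ ε S, 0 < ε → ε ≤ S → ∫⁻ t in Ioc ε S, f t ≤ ENNReal.ofReal (K / S) + R) :
    ∫⁻ t in Ioi 0, f t ≤ R := by
  have hcover : AECover (volume.restrict (Ioi 0)) atTop fun S : ℝ => Ioc S⁻¹ S :=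
    (aecover_Ioi_of_Ioi tendsto_inv_atTop_zero).inter (aecover_Iic tendsto_id)
  have hbound : Tendsto (fun S => ENNReal.ofReal (K / S) + R) atTop (𝓝 R) := by
    simpa using ((ENNReal.tendsto_ofReal (tendsto_const_nhds.div_atTop tendsto_id)).add
      (tendsto_const_nhds (x := R)))
  refine le_of_tendsto_of_tendsto (hcover.lintegral_tendsto_of_countably_generated hf) hbound ?_
  filter_upwards [eventually_ge_atTop 1] with S hS₁
  have hS : 0 < S := by linarith
  rw [Measure.restrict_restrict measurableSet_Ioc,
    inter_eq_left.2 (show Ioc S⁻¹ S ⊆ Ioi 0 from fun t ht => (inv_pos.2 hS).trans ht.1)]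
  exact h _ _ (inv_pos.2 hS) ((inv_le_one_of_one_le₀ hS₁).trans hS₁)

/-- If `U = U_j` is differentiable with `|U'| ≤ 2√(U·V)` (where
`V = U_{j+1}`) and `U t ≤ C₀ t^(-1-2j)`, then
`∫₀^∞ t^(2j-1) U(t) dt ≤ C ∫₀^∞ s^(2j+1) V(s) ds`, with `C = C(j)`.
The integrals are taken in the extended sense, so the conclusion in particular says that
if the right-hand side is finite then so is the left. -/
theorem stmt_1 (j : ℕ) (hj : 1 ≤ j) :
    ∃ C : ℝ, 0 < C ∧
      ∀ (U U' V : ℝ → ℝ) (C₀ : ℝ),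
        ContinuousOn U (Set.Ioi 0) → ContinuousOn V (Set.Ioi 0) →
        (∀ t, 0 < t → 0 ≤ U t) → (∀ t, 0 < t → 0 ≤ V t) →
        (∀ t, 0 < t → HasDerivAt U (U' t) t) →
        (∀ t, 0 < t → U t ≤ C₀ * t ^ ((-1 : ℝ) - 2 * (j : ℝ))) →
        (∀ s, 0 < s → |U' s| ≤ 2 * Real.sqrt (U s * V s)) →
        ∫⁻ t in Set.Ioi (0 : ℝ), ENNReal.ofReal (t ^ (2 * j - 1) * U t) ≤
          ENNReal.ofReal C * ∫⁻ s in Set.Ioi (0 : ℝ), ENNReal.ofReal (s ^ (2 * j + 1) * V s) := by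
  refine ⟨((j : ℝ) ^ 2)⁻¹, by positivity, fun U U' V C₀ hUc hVc hU0 hV0 hder hdecay hU' => ?_⟩
  refine setLIntegral_Ioi_zero_le_of_forall_Ioc (K := C₀ / j)
    (((continuous_pow _).continuousOn.mul hUc).aemeasurable measurableSet_Ioi).ennreal_ofReal
    fun ε S hε hεS => ?_
  have hpos : Icc ε S ⊆ Ioi 0 := fun t ht => hε.trans_le ht.1
  have hS : S ^ (2 * j) * U S ≤ C₀ / S :=
    pow_mul_le_div_of_le_mul_rpow (hε.trans_le hεS) (by exact_mod_cast hdecay S (hε.trans_le hεS))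
  calc ∫⁻ t in Ioc ε S, ENNReal.ofReal (t ^ (2 * j - 1) * U t)
      ≤ ENNReal.ofReal (C₀ / S / j) + ENNReal.ofReal ((j : ℝ) ^ 2)⁻¹ *
          ∫⁻ t in Ioc ε S, ENNReal.ofReal (t ^ (2 * j + 1) * V t) :=
        setLIntegral_Ioc_pow_mul_le_of_abs_deriv_le_two_sqrt hj hε hεS
          (fun t ht => hder t (hpos ht)) (hVc.mono hpos) (fun t ht => hU0 t (hpos ht))
          (fun t ht => hV0 t (hpos ht)) (fun t ht => hU' t (hpos ht)) hS
    _ ≤ ENNReal.ofReal (C₀ / j / S) + ENNReal.ofReal ((j : ℝ) ^ 2)⁻¹ *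
          ∫⁻ s in Ioi 0, ENNReal.ofReal (s ^ (2 * j + 1) * V s) := by
        rw [div_right_comm]
        gcongr
        exact fun t ht => hε.trans ht.1
end

section
/- Let F : ℝⁿ × (0,∞) → ℂ be a measurable function and μ a positive measure on ℝⁿ × (0,∞). Suppose the Carleson norm ‖μ‖_C := sup over cubes R ⊂ ℝⁿ of |R|^{-1} μ(R × (0, ℓ(R))) is finite, and that the nontangential maximal function N F(x) := sup_{|x−y|<t} |F(y,t)| is integrable over ℝⁿ. Then |∫_{ℝⁿ×(0,∞)} F dμ| ≤ C_n ‖μ‖_C ∫_{ℝⁿ} N F(x) dx. -/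
open MeasureTheory

/-!
By the layer-cake formula it suffices to compare level sets: for every `s`,
`μ {|F| > s} ≤ C_n ‖μ‖_C |{NF > s}|`. Every point `(y, t)` of `{|F| > s}` lies above the open set
`E = {NF > s}`, in the sense that the ball `B(y, t)` is contained in `E`. Applying the Vitali
covering lemma to the balls `B(y, t/2)` gives disjoint balls `B(y_k, t_k/2) ⊆ E` such that the
Carleson boxes over the cubes of side `3 t_k` centred at `y_k` cover `{|F| > s}`. The Carleson
condition then bounds `μ {|F| > s}` by
`3ⁿ ‖μ‖_C ∑ t_kⁿ = 3ⁿ ‖μ‖_C ∑ |B(y_k, t_k/2)| ≤ 3ⁿ ‖μ‖_C |E|`,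
where `B` is the ball of the sup metric, i.e. a cube.
-/

open Metric Set

variable {ι : Type*}

def carlesonBox (c : ι → ℝ) (L : ℝ) : Set ((ι → ℝ) × ℝ) :=
  {x | ∀ i, |x i - c i| ≤ L / 2} ×ˢ Ioo 0 L

variable [Fintype ι]

def CarlesonWith (A : ℝ) (μ : Measure ((ι → ℝ) × ℝ)) : Prop :=
  ∀ c L, 0 < L → μ (carlesonBox c L) ≤ ENNReal.ofReal (A * L ^ Fintype.card ι)

lemma mem_carlesonBox_of_ball_inter_nonempty {p q : (ι → ℝ) × ℝ} (hp : 0 < p.2)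
    (hpq : p.2 ≤ 2 * q.2) (hne : (ball p.1 (p.2 / 2) ∩ ball q.1 (q.2 / 2)).Nonempty) :
    p ∈ carlesonBox q.1 (3 * q.2) := by
  obtain ⟨z, hzp, hzq⟩ := hne
  have hdist : dist p.1 q.1 < 3 * q.2 / 2 := calc
    dist p.1 q.1 ≤ dist z p.1 + dist z q.1 := dist_triangle_left _ _ _
    _ < p.2 / 2 + q.2 / 2 := add_lt_add (mem_ball.1 hzp) (mem_ball.1 hzq)
    _ ≤ 3 * q.2 / 2 := by linarith
  refine ⟨fun i => ?_, hp, by linarith⟩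
  simpa [← Real.dist_eq] using (dist_le_pi_dist p.1 q.1 i).trans hdist.le

variable {A : ℝ} {μ : Measure ((ι → ℝ) × ℝ)}

lemma measure_le_volume_of_forall_ball_subset_of_le (hμ : CarlesonWith A μ)
    {S : Set ((ι → ℝ) × ℝ)} {E : Set (ι → ℝ)} {R : ℝ}
    (hS : ∀ p ∈ S, 0 < p.2 ∧ ball p.1 p.2 ⊆ E) (hR : ∀ p ∈ S, p.2 ≤ R) :
    μ S ≤ ENNReal.ofReal (3 ^ Fintype.card ι * A) * volume E := by
  set B : (ι → ℝ) × ℝ → Set (ι → ℝ) := fun p => ball p.1 (p.2 / 2)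
  have hB : ∀ p ∈ S, (B p).Nonempty := fun p hp => nonempty_ball.2 (by linarith [(hS p hp).1])
  obtain ⟨u, huS, hdisj, hcover⟩ :=
    Vitali.exists_disjoint_subfamily_covering_enlargement B S (fun p => p.2 / 2) 2 one_lt_two
      (fun p hp => by linarith [(hS p hp).1]) (R / 2) (fun p hp => by linarith [hR p hp]) hB
  have hu : u.Countable :=
    hdisj.countable_of_isOpen (fun _ _ => isOpen_ball) fun p hp => hB p (huS hp)
  have hSu : S ⊆ ⋃ q ∈ u, carlesonBox q.1 (3 * q.2) := fun p hp => by
    obtain ⟨q, hq, hne, hle⟩ := hcover p hp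
    exact mem_biUnion hq (mem_carlesonBox_of_ball_inter_nonempty (hS p hp).1 (by linarith) hne)
  have hbox : ∀ q ∈ u, μ (carlesonBox q.1 (3 * q.2)) ≤
      ENNReal.ofReal (3 ^ Fintype.card ι * A) * volume (B q) := fun q hq => by
    have hq := (hS q (huS hq)).1
    rw [Real.volume_pi_ball _ (by linarith), mul_div_cancel₀ _ two_ne_zero,
      ← ENNReal.ofReal_mul' (by positivity), mul_right_comm, ← mul_pow, mul_comm _ A]
    exact hμ _ _ (by linarith)
  have hBE : (⋃ q : u, B q) ⊆ E := iUnion_subset fun q =>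
    (ball_subset_ball (by linarith [(hS q (huS q.2)).1])).trans (hS q (huS q.2)).2
  calc μ S ≤ ∑' q : u, μ (carlesonBox q.1.1 (3 * q.1.2)) :=
        (measure_mono hSu).trans (measure_biUnion_le μ hu _)
    _ ≤ ∑' q : u, ENNReal.ofReal (3 ^ Fintype.card ι * A) * volume (B q) :=
        ENNReal.tsum_le_tsum fun q => hbox q q.2
    _ = ENNReal.ofReal (3 ^ Fintype.card ι * A) * ∑' q : u, volume (B q) := ENNReal.tsum_mul_left
    _ ≤ ENNReal.ofReal (3 ^ Fintype.card ι * A) * volume E := by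
        gcongr
        exact (tsum_meas_le_meas_iUnion_of_disjoint _ (fun _ => measurableSet_ball)
          (hdisj.subtype _ _)).trans (measure_mono hBE)

lemma measure_le_volume_of_forall_ball_subset (hμ : CarlesonWith A μ)
    {S : Set ((ι → ℝ) × ℝ)} {E : Set (ι → ℝ)} (hS : ∀ p ∈ S, 0 < p.2 ∧ ball p.1 p.2 ⊆ E) :
    μ S ≤ ENNReal.ofReal (3 ^ Fintype.card ι * A) * volume E := by
  -- Vitali's lemma needs bounded radii, so exhaust `S` by sets of bounded height.
  have hS_eq : S = ⋃ k : ℕ, {p ∈ S | p.2 ≤ k} := by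
    ext p
    simpa using fun _ => exists_nat_ge p.2
  have hmono : Monotone fun k : ℕ => {p ∈ S | p.2 ≤ k} :=
    fun a b hab p hp => ⟨hp.1, hp.2.trans (Nat.cast_le.2 hab)⟩
  rw [hS_eq, hmono.measure_iUnion]
  exact iSup_le fun k => measure_le_volume_of_forall_ball_subset_of_le hμ
    (fun p hp => hS p hp.1) fun p hp => hp.2

lemma measure_lt_le_volume_lt (hμ : CarlesonWith A μ) (hμ0 : μ {p | p.2 ≤ 0} = 0)
    {f : (ι → ℝ) × ℝ → ℝ} {N : (ι → ℝ) → ℝ} (hfN : ∀ x y t, dist x y < t → f (y, t) ≤ N x) (s : ℝ) :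
    μ {p | s < f p} ≤ ENNReal.ofReal (3 ^ Fintype.card ι * A) * volume {x | s < N x} := by
  have hconull : μ {p : (ι → ℝ) × ℝ | 0 < p.2}ᶜ = 0 := by
    simpa only [compl_ofPred, not_lt] using hμ0
  rw [← measure_inter_conull hconull]
  refine measure_le_volume_of_forall_ball_subset hμ fun p hp => ⟨hp.2, fun x hx => ?_⟩
  exact hp.1.trans_le (hfN x p.1 p.2 (mem_ball.1 hx))

lemma lintegral_le_of_le_nontangential (hμ : CarlesonWith A μ) (hμ0 : μ {p | p.2 ≤ 0} = 0)
    {f : (ι → ℝ) × ℝ → ℝ} {N : (ι → ℝ) → ℝ} (hf0 : ∀ p, 0 ≤ f p) (hf : AEMeasurable f μ)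
    (hN : AEMeasurable N) (hfN : ∀ x y t, dist x y < t → f (y, t) ≤ N x) :
    ∫⁻ p, ENNReal.ofReal (f p) ∂μ ≤
      ENNReal.ofReal (3 ^ Fintype.card ι * A) * ∫⁻ x, ENNReal.ofReal (N x) := by
  have hN0 : ∀ x, 0 ≤ N x := fun x => (hf0 _).trans (hfN x x 1 (by simp))
  rw [lintegral_eq_lintegral_meas_lt μ (ae_of_all _ hf0) hf,
    lintegral_eq_lintegral_meas_lt volume (ae_of_all _ hN0) hN, ← lintegral_const_mul' _ _
      ENNReal.ofReal_ne_top]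
  exact lintegral_mono fun s => measure_lt_le_volume_lt hμ hμ0 hfN s

/-- Carleson's embedding lemma.  If `μ` is a measure on the upper
half-space with Carleson norm at most `A` (tested on all cubes `R × (0, ℓ(R))`),
`F` is measurable, and `NF` is an integrable majorant of the nontangential maximal
function of `F`, then `|∫ F dμ| ≤ C_n · A · ∫ NF`. -/
theorem stmt_3 (n : ℕ) :
    ∃ C : ℝ, 0 < C ∧
      ∀ (F : (Fin n → ℝ) × ℝ → ℂ) (μ : Measure ((Fin n → ℝ) × ℝ))
        (A : ℝ) (NF : (Fin n → ℝ) → ℝ),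
        0 ≤ A →
        Measurable F →
        μ {p : (Fin n → ℝ) × ℝ | p.2 ≤ 0} = 0 →
        -- Carleson norm bound: μ(R × (0, ℓ(R))) ≤ A |R| for every cube R
        (∀ (c : Fin n → ℝ) (L : ℝ), 0 < L →
          μ ({x : Fin n → ℝ | ∀ i, |x i - c i| ≤ L / 2} ×ˢ Set.Ioo (0 : ℝ) L) ≤
            ENNReal.ofReal (A * L ^ n)) →
        -- NF dominates F nontangentially
        (∀ (x y : Fin n → ℝ) (t : ℝ), dist x y < t → ‖F (y, t)‖ ≤ NF x) →
        Integrable NF volume →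
        ‖∫ p, F p ∂μ‖ ≤ C * A * ∫ x, NF x := by
  refine ⟨3 ^ n, by positivity, fun F μ A NF hA hF hμ0 hμ hNF hNF_int => ?_⟩
  have hNF0 : 0 ≤ NF := fun x => (norm_nonneg _).trans (hNF x x 1 (by simp))
  have hNF_int0 : 0 ≤ ∫ x, NF x := integral_nonneg hNF0
  have hCar : CarlesonWith A μ := fun c L hL => by rw [Fintype.card_fin]; exact hμ c L hL
  have hlint := lintegral_le_of_le_nontangential hCar hμ0
    (fun p => norm_nonneg (F p)) hF.norm.aemeasurable hNF_int.aemeasurable hNF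
  rw [Fintype.card_fin, ← ofReal_integral_eq_lintegral_ofReal hNF_int (ae_of_all _ hNF0),
    ← ENNReal.ofReal_mul (by positivity)] at hlint
  calc ‖∫ p, F p ∂μ‖ ≤ ∫ p, ‖F p‖ ∂μ := norm_integral_le_integral_norm _
    _ = (∫⁻ p, ENNReal.ofReal ‖F p‖ ∂μ).toReal :=
        integral_eq_lintegral_of_nonneg_ae (ae_of_all _ fun p => norm_nonneg _)
          hF.norm.aestronglyMeasurable
    _ ≤ 3 ^ n * A * ∫ x, NF x :=
        ENNReal.toReal_le_of_le_ofReal (by positivity) hlint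
end

section
/- Fix positive integers m and M and let a_ξ = M!/ξ! for multi-indices ξ ∈ ℕⁿ with |ξ| = M. Define, for an array F = (F_α)_{|α|=m} of complex numbers, Ψ(F)_ε := Σ_{|ξ|=M, 2ξ < ε} a_ξ F_{ε−2ξ} for each multi-index ε with |ε| = m + 2M, where 2ξ < ε means 2ξ_i ≤ ε_i for all i with strict inequality for at least one i when 2ξ ≠ ε (i.e., ε − 2ξ is a valid multi-index of length m with ε−2ξ ≥ 0). Then Ψ is injective: F is uniquely determined by Ψ(F). -/
/-!
Fix a coordinate `j` and recover `F α` by downward induction on `α j`. In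
`Ψ(F)_{α + 2M e_j}` the term of `ξ = M e_j` is `F α` with coefficient `M!/M! = 1`; every other
admissible `ξ` has `ξ j < M`, so its term involves `F β` with `|β| = m` and `β j > α j`, which is
already known.
-/

open Finset

namespace MultiIndex

variable {ι K : Type*} [DecidableEq ι]

theorem add_single_sub_two_smul_single (M : ℕ) (α : ι → ℕ) (j : ι) :
    α + Pi.single j (2 * M) - 2 • Pi.single j M = α := by
  ext i
  rcases eq_or_ne i j with rfl | hi <;> simp [*]

variable [Fintype ι]

theorem eq_single_of_sum_le_apply {ξ : ι → ℕ} {j : ι} (h : ∑ i, ξ i ≤ ξ j) :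
    ξ = Pi.single j (ξ j) := by
  have hrest : ∑ i ∈ univ.erase j, ξ i = 0 := by
    have := add_sum_erase univ ξ (mem_univ j)
    omega
  ext i
  rcases eq_or_ne i j with rfl | hi
  · simp
  · simpa [hi] using sum_eq_zero_iff.1 hrest i (by simp [hi])

theorem prod_factorial_single (M : ℕ) (j : ι) :
    ∏ i, ((Pi.single j M : ι → ℕ) i).factorial = M.factorial := by
  rw [prod_eq_single j (fun i _ hi => by simp [hi]) (by simp)]
  simp

def shifts (M : ℕ) (ε : ι → ℕ) : Finset (ι → ℕ) :=
  (Iic ε).filter (fun ξ => (∑ i, ξ i) = M ∧ ∀ i, 2 * ξ i ≤ ε i)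

theorem sum_sub_two_smul_of_mem_shifts {M : ℕ} {ε ξ : ι → ℕ} (hξ : ξ ∈ shifts M ε) :
    ∑ i, (ε - 2 • ξ) i + 2 * M = ∑ i, ε i := by
  obtain ⟨-, hsum, hle⟩ := mem_filter.1 hξ
  rw [← hsum, mul_sum, ← sum_add_distrib]
  refine sum_congr rfl fun i _ => ?_
  simp only [Pi.sub_apply, Pi.smul_apply, smul_eq_mul]
  exact Nat.sub_add_cancel (hle i)

theorem single_mem_shifts (M : ℕ) (α : ι → ℕ) (j : ι) :
    Pi.single j M ∈ shifts M (α + Pi.single j (2 * M)) := by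
  refine mem_filter.2 ⟨mem_Iic.2 fun i => ?_, by simp, fun i => ?_⟩ <;>
    rcases eq_or_ne i j with rfl | hi <;> simp [*]
  omega

theorem lt_apply_sub_two_smul_of_mem_shifts {M : ℕ} {α ξ : ι → ℕ} {j : ι}
    (hξ : ξ ∈ (shifts M (α + Pi.single j (2 * M))).erase (Pi.single j M)) :
    α j < (α + Pi.single j (2 * M) - 2 • ξ : ι → ℕ) j := by
  obtain ⟨hne, hξ⟩ := mem_erase.1 hξ
  obtain ⟨-, hsum, -⟩ := mem_filter.1 hξ
  have hlt : ξ j < M := by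
    refine (hsum ▸ single_le_sum (fun i _ => Nat.zero_le _) (mem_univ j)).lt_of_ne fun h => ?_
    exact hne (h ▸ eq_single_of_sum_le_apply (hsum.trans h.symm).le)
  simp only [Pi.sub_apply, Pi.add_apply, Pi.single_eq_same, Pi.smul_apply, smul_eq_mul]
  omega

variable [Field K]

def psi (M : ℕ) (F : (ι → ℕ) → K) (ε : ι → ℕ) : K :=
  ∑ ξ ∈ shifts M ε, ((M.factorial : K) / ∏ i, ((ξ i).factorial : K)) * F (ε - 2 • ξ)

theorem psi_sub (M : ℕ) (F G : (ι → ℕ) → K) (ε : ι → ℕ) :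
    psi M (F - G) ε = psi M F ε - psi M G ε := by
  simp only [psi, Pi.sub_apply, mul_sub, sum_sub_distrib]

theorem psi_add_single [CharZero K] (M : ℕ) (F : (ι → ℕ) → K) (α : ι → ℕ) (j : ι) :
    psi M F (α + Pi.single j (2 * M)) = F α +
      ∑ ξ ∈ (shifts M (α + Pi.single j (2 * M))).erase (Pi.single j M),
        ((M.factorial : K) / ∏ i, ((ξ i).factorial : K)) * F (α + Pi.single j (2 * M) - 2 • ξ) := by
  rw [psi, ← add_sum_erase _ _ (single_mem_shifts M α j), add_single_sub_two_smul_single]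
  have hM : (M.factorial : K) ≠ 0 := Nat.cast_ne_zero.2 M.factorial_ne_zero
  rw [← Nat.cast_prod, prod_factorial_single, div_self hM, one_mul]

theorem eq_zero_of_psi_eq_zero [CharZero K] {m M : ℕ} {D : (ι → ℕ) → K} (j : ι)
    (hD : ∀ ε : ι → ℕ, ∑ i, ε i = m + 2 * M → psi M D ε = 0) (α : ι → ℕ) (hα : ∑ i, α i = m) :
    D α = 0 := by
  induction hk : m - α j using Nat.strong_induction_on generalizing α with
  | _ k ih =>
  have hstep := psi_add_single M D α j
  have hε : ∑ i, (α + Pi.single j (2 * M) : ι → ℕ) i = m + 2 * M := by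
    simp [sum_add_distrib, hα]
  rw [hD _ hε, sum_eq_zero fun ξ hξ => ?_, add_zero, eq_comm] at hstep
  · exact hstep
  have hβ : ∑ i, (α + Pi.single j (2 * M) - 2 • ξ : ι → ℕ) i = m := by
    have := sum_sub_two_smul_of_mem_shifts (mem_of_mem_erase hξ)
    omega
  have hβj : (α + Pi.single j (2 * M) - 2 • ξ : ι → ℕ) j ≤ m :=
    hβ ▸ single_le_sum (fun i _ => Nat.zero_le _) (mem_univ j)
  have hαj := lt_apply_sub_two_smul_of_mem_shifts hξ
  rw [ih _ (by omega) _ hβ rfl, mul_zero]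

end MultiIndex

theorem stmt_8_general (n m M : ℕ) (hm : 1 ≤ m)
    (F G : (Fin n → ℕ) → ℂ)
    (h : ∀ ε : Fin n → ℕ, (∑ i, ε i) = m + 2 * M →
      (∑ ξ ∈ (Finset.Iic ε).filter (fun ξ => (∑ i, ξ i) = M ∧ ∀ i, 2 * ξ i ≤ ε i),
        ((M.factorial : ℂ) / ∏ i, ((ξ i).factorial : ℂ)) * F (ε - 2 • ξ)) =
      ∑ ξ ∈ (Finset.Iic ε).filter (fun ξ => (∑ i, ξ i) = M ∧ ∀ i, 2 * ξ i ≤ ε i),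
        ((M.factorial : ℂ) / ∏ i, ((ξ i).factorial : ℂ)) * G (ε - 2 • ξ)) :
    ∀ α : Fin n → ℕ, (∑ i, α i) = m → F α = G α := by
  intro α hα
  obtain ⟨j, -, -⟩ := exists_ne_zero_of_sum_ne_zero (hα.trans_ne (by omega))
  rw [← sub_eq_zero, ← Pi.sub_apply]
  refine MultiIndex.eq_zero_of_psi_eq_zero (M := M) j (fun ε hε => ?_) α hα
  rw [MultiIndex.psi_sub, sub_eq_zero]
  unfold MultiIndex.psi MultiIndex.shifts
  -- the two sides differ only in the `Decidable` instance of the filter predicate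
  convert h ε hε

/-- With `a_ξ = M!/ξ!`, the map
`Ψ(F)_ε = Σ_{|ξ|=M, 2ξ ≤ ε} a_ξ F_{ε−2ξ}` (for `|ε| = m + 2M`) determines the array
`(F_α)_{|α|=m}` uniquely, i.e. `Ψ` is injective. -/
theorem stmt_8 (n m M : ℕ) (hm : 1 ≤ m) (hM : 1 ≤ M)
    (F G : (Fin n → ℕ) → ℂ)
    (h : ∀ ε : Fin n → ℕ, (∑ i, ε i) = m + 2 * M →
      (∑ ξ ∈ (Finset.Iic ε).filter (fun ξ => (∑ i, ξ i) = M ∧ ∀ i, 2 * ξ i ≤ ε i),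
        ((M.factorial : ℂ) / ∏ i, ((ξ i).factorial : ℂ)) * F (ε - 2 • ξ)) =
      ∑ ξ ∈ (Finset.Iic ε).filter (fun ξ => (∑ i, ξ i) = M ∧ ∀ i, 2 * ξ i ≤ ε i),
        ((M.factorial : ℂ) / ∏ i, ((ξ i).factorial : ℂ)) * G (ε - 2 • ξ)) :
    ∀ α : Fin n → ℕ, (∑ i, α i) = m → F α = G α :=
  stmt_8_general n m M hm F G h
end

section
/- Let f_j ∈ C_c^∞(ℝⁿ) for 0 ≤ j ≤ m−1, and let η ∈ C_c^∞(ℝⁿ) be supported in B(0,1) with ∫η = 1 and vanishing moments ∫x^ζ η(x) dx = 0 for 1 ≤ |ζ| ≤ m−1. Define H(x,t) = Σ_{j=0}^{m−1} (t^j/j!) (f_j ∗ η_t)(x) where η_t(x) = t^{−n}η(x/t). Then for each 0 ≤ k ≤ m−1 and each x ∈ ℝⁿ, lim_{t→0⁺} ∂_t^k H(x,t) = f_k(x). -/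
open MeasureTheory

section Aux

private lemma diffIter {h : ℝ → ℂ} (hh : ContDiff ℝ (⊤ : ℕ∞) h) (m : ℕ) :
    Differentiable ℝ (iteratedDeriv m h) :=
  ContDiff.differentiable_iteratedDeriv' m (hh.of_le (by exact_mod_cast le_top))

private lemma contDiff_ofRealC : ContDiff ℝ (⊤ : ℕ∞) (fun t : ℝ => (t : ℂ)) :=
  Complex.ofRealCLM.contDiff

private lemma deriv_ofRealC (t : ℝ) : deriv (fun t : ℝ => (t : ℂ)) t = 1 :=
  Complex.ofRealCLM.hasDerivAt.deriv

/-- Leibniz rule for multiplication by `t`. -/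
private lemma aux_id_mul {h : ℝ → ℂ} (hh : ContDiff ℝ (⊤ : ℕ∞) h) (k : ℕ) :
    iteratedDeriv (k + 1) (fun t : ℝ => (t : ℂ) * h t)
      = fun t : ℝ => (t : ℂ) * iteratedDeriv (k + 1) h t
          + ((k : ℂ) + 1) * iteratedDeriv k h t := by
  induction k with
  | zero =>
    funext t
    rw [iteratedDeriv_one]
    have hd : DifferentiableAt ℝ h t := (hh.differentiable (by simp)) t
    have hc : DifferentiableAt ℝ (fun t : ℝ => (t : ℂ)) t :=
      (contDiff_ofRealC.differentiable (by simp)) t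
    rw [deriv_fun_mul hc hd, deriv_ofRealC, iteratedDeriv_one, iteratedDeriv_zero]
    push_cast
    ring
  | succ k ih =>
    funext t
    rw [iteratedDeriv_succ, ih]
    have h1 : DifferentiableAt ℝ (fun t : ℝ => (t : ℂ) * iteratedDeriv (k + 1) h t) t :=
      ((contDiff_ofRealC.differentiable (by simp)) t).mul
        ((diffIter hh (k + 1)) t)
    have h2 : DifferentiableAt ℝ (fun t : ℝ => ((k : ℂ) + 1) * iteratedDeriv k h t) t :=
      ((diffIter hh k) t).const_mul _
    rw [deriv_fun_add h1 h2,
      deriv_fun_mul ((contDiff_ofRealC.differentiable (by simp)) t)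
        ((diffIter hh (k + 1)) t),
      deriv_const_mul _ ((diffIter hh k) t), deriv_ofRealC]
    have hk1 : deriv (iteratedDeriv (k + 1) h) t = iteratedDeriv (k + 1 + 1) h t :=
      (congrFun iteratedDeriv_succ t).symm
    have hk0 : deriv (iteratedDeriv k h) t = iteratedDeriv (k + 1) h t :=
      (congrFun iteratedDeriv_succ t).symm
    rw [hk1, hk0]
    push_cast
    ring

/-- Value at `0` of iterated derivatives of `t^j * g t`. -/
private lemma aux_pow_mul : ∀ (j : ℕ) {g : ℝ → ℂ}, ContDiff ℝ (⊤ : ℕ∞) g →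
    ∀ k : ℕ, iteratedDeriv k (fun t : ℝ => (t : ℂ) ^ j * g t) 0
      = if j ≤ k then (Nat.descFactorial k j : ℂ) * iteratedDeriv (k - j) g 0 else 0 := by
  intro j
  induction j with
  | zero =>
    intro g hg k
    simp only [pow_zero, one_mul, Nat.zero_le, if_true, Nat.descFactorial_zero,
      Nat.cast_one, Nat.sub_zero]
  | succ j ih =>
    intro g hg k
    have hgj : ContDiff ℝ (⊤ : ℕ∞) (fun t : ℝ => (t : ℂ) ^ j * g t) :=
      (contDiff_ofRealC.pow j).mul hg
    have hfe : (fun t : ℝ => (t : ℂ) ^ (j + 1) * g t)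
        = fun t : ℝ => (t : ℂ) * ((t : ℂ) ^ j * g t) := by
      funext t; ring
    cases k with
    | zero =>
      rw [hfe, iteratedDeriv_zero]
      simp
    | succ k =>
      rw [hfe, aux_id_mul hgj k]
      simp only [Complex.ofReal_zero, zero_mul, zero_add]
      rw [ih hg k]
      by_cases hjk : j ≤ k
      · rw [if_pos hjk, if_pos (Nat.succ_le_succ hjk)]
        rw [Nat.succ_descFactorial_succ, Nat.succ_sub_succ]
        push_cast
        ring
      · rw [if_neg hjk, if_neg (fun h => hjk (Nat.succ_le_succ_iff.mp h)), mul_zero]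

private lemma my_iteratedDeriv_const_mul (c : ℂ) {g : ℝ → ℂ} (hg : ContDiff ℝ (⊤ : ℕ∞) g)
    (k : ℕ) : iteratedDeriv k (fun t : ℝ => c * g t) = fun t => c * iteratedDeriv k g t := by
  induction k with
  | zero => simp [iteratedDeriv_zero]
  | succ k ih =>
    rw [iteratedDeriv_succ, ih]
    funext t
    rw [deriv_const_mul c ((diffIter hg k) t), iteratedDeriv_succ]

private lemma my_iteratedDeriv_sum {ι : Type*} (s : Finset ι) (F : ι → ℝ → ℂ)
    (hF : ∀ i ∈ s, ContDiff ℝ (⊤ : ℕ∞) (F i)) (k : ℕ) :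
    iteratedDeriv k (fun t : ℝ => ∑ i ∈ s, F i t)
      = fun t => ∑ i ∈ s, iteratedDeriv k (F i) t := by
  induction k with
  | zero => simp [iteratedDeriv_zero]
  | succ k ih =>
    rw [iteratedDeriv_succ, ih]
    funext t
    rw [deriv_fun_sum (fun i hi => (diffIter (hF i hi) k) t)]
    simp only [iteratedDeriv_succ]

/-- Vanishing of moments against a multilinear functional. -/
private lemma moment_vanish {n : ℕ} {η : (Fin n → ℝ) → ℝ} (hηcont : Continuous η)
    (hηc : HasCompactSupport η) {r : ℕ}
    (hmom : ∀ ζ : Fin n → ℕ, (∑ i, ζ i) = r → ∫ y, (∏ i, y i ^ ζ i) * η y = 0)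
    (M : ContinuousMultilinearMap ℝ (fun _ : Fin r => (Fin n → ℝ)) ℂ) :
    ∫ y : Fin n → ℝ, (η y : ℂ) * M (fun _ => -y) = 0 := by
  classical
  have hexp : ∀ y : Fin n → ℝ, M (fun _ => -y)
      = ∑ d : Fin r → Fin n, (∏ q : Fin r, -(y (d q)))
          • M (fun q => (Pi.single (d q) (1 : ℝ) : Fin n → ℝ)) := by
    intro y
    have h1 : (fun _ : Fin r => -y)
        = fun _ : Fin r => ∑ i : Fin n, (-(y i)) • (Pi.single i (1 : ℝ) : Fin n → ℝ) := by
      funext q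
      rw [← Finset.univ_sum_single (-y)]
      refine Finset.sum_congr rfl fun i _ => ?_
      funext l
      by_cases hl : l = i <;> simp [Pi.single_apply, hl]
    rw [h1]
    have h2 := M.map_sum
      (g := fun (_ : Fin r) (i : Fin n) => (-(y i)) • (Pi.single i (1 : ℝ) : Fin n → ℝ))
    exact h2.trans (Finset.sum_congr rfl fun d _ => M.map_smul_univ _ _)
  have hterm : ∀ d : Fin r → Fin n,
      (∫ y : Fin n → ℝ, (η y : ℂ)
        * ((∏ q : Fin r, -(y (d q))) • M (fun q => (Pi.single (d q) (1 : ℝ) : Fin n → ℝ))))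
        = 0 := by
    intro d
    have hre : ∀ y : Fin n → ℝ, (η y : ℂ) * ((∏ q : Fin r, -(y (d q)))
          • M (fun q => (Pi.single (d q) (1 : ℝ) : Fin n → ℝ)))
        = ((η y * ∏ q : Fin r, -(y (d q)) : ℝ) : ℂ)
          * M (fun q => (Pi.single (d q) (1 : ℝ) : Fin n → ℝ)) := by
      intro y
      rw [Complex.real_smul, Complex.ofReal_mul]
      ring
    have hFint : Integrable (fun y : Fin n → ℝ => η y * ∏ q : Fin r, -(y (d q))) := by
      refine Continuous.integrable_of_hasCompactSupport ?_ hηc.mul_right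
      exact hηcont.mul (continuous_finset_prod _ fun q _ => (continuous_apply (d q)).neg)
    have hcast : (∫ y : Fin n → ℝ, ((η y * ∏ q : Fin r, -(y (d q)) : ℝ) : ℂ))
        = Complex.ofReal (∫ y : Fin n → ℝ, η y * ∏ q : Fin r, -(y (d q))) := by
      simpa only [Complex.ofRealCLM_apply] using Complex.ofRealCLM.integral_comp_comm hFint
    have hζ : ∫ y : Fin n → ℝ, η y * ∏ q : Fin r, -(y (d q)) = 0 := by
      have hsum : (∑ i, (Finset.univ.filter fun q : Fin r => d q = i).card) = r := by
        have h := Finset.card_eq_sum_card_fiberwise (f := d) (s := Finset.univ)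
          (t := Finset.univ) (fun x _ => Finset.mem_univ (d x))
        simpa using h.symm
      have hps : ∀ y : Fin n → ℝ, (∏ q : Fin r, -(y (d q)))
          = (-1 : ℝ) ^ r
            * ∏ i : Fin n, y i ^ (Finset.univ.filter fun q : Fin r => d q = i).card := by
        intro y
        have h1 : (∏ q : Fin r, -(y (d q))) = (-1 : ℝ) ^ r * ∏ q : Fin r, y (d q) := by
          rw [show (∏ q : Fin r, -(y (d q))) = ∏ q : Fin r, (-1 : ℝ) * y (d q) from
            Finset.prod_congr rfl fun q _ => by ring,
            Finset.prod_mul_distrib, Finset.prod_const, Finset.card_univ, Fintype.card_fin]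
        have h2 : (∏ q : Fin r, y (d q))
            = ∏ i : Fin n, y i ^ (Finset.univ.filter fun q : Fin r => d q = i).card := by
          rw [Finset.prod_comp (fun i => y i) d]
          refine Finset.prod_subset (Finset.subset_univ _) fun b _ hb => ?_
          have hcard : (Finset.univ.filter fun q : Fin r => d q = b).card = 0 := by
            rw [Finset.card_eq_zero, Finset.filter_eq_empty_iff]
            intro q _ h
            exact hb (h ▸ Finset.mem_image_of_mem d (Finset.mem_univ q))
          rw [hcard, pow_zero]
        rw [h1, h2]
      simp_rw [hps]
      have hcomm : ∀ y : Fin n → ℝ,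
          η y * ((-1 : ℝ) ^ r
            * ∏ i : Fin n, y i ^ (Finset.univ.filter fun q : Fin r => d q = i).card)
          = (-1 : ℝ) ^ r
            * ((∏ i : Fin n, y i ^ (Finset.univ.filter fun q : Fin r => d q = i).card) * η y) :=
        fun y => by ring
      simp_rw [hcomm]
      rw [MeasureTheory.integral_const_mul, hmom _ hsum, mul_zero]
    simp_rw [hre]
    rw [integral_mul_const, hcast, hζ]
    simp
  calc ∫ y : Fin n → ℝ, (η y : ℂ) * M (fun _ => -y)
      = ∫ y : Fin n → ℝ, ∑ d : Fin r → Fin n, (η y : ℂ)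
          * ((∏ q : Fin r, -(y (d q)))
            • M (fun q => (Pi.single (d q) (1 : ℝ) : Fin n → ℝ))) := by
        simp_rw [hexp, Finset.mul_sum]
    _ = ∑ d : Fin r → Fin n, ∫ y : Fin n → ℝ, (η y : ℂ)
          * ((∏ q : Fin r, -(y (d q)))
            • M (fun q => (Pi.single (d q) (1 : ℝ) : Fin n → ℝ))) := by
        refine integral_finset_sum _ fun d _ => ?_
        refine Continuous.integrable_of_hasCompactSupport ?_ ?_
        · exact (Complex.continuous_ofReal.comp hηcont).mul
            (by fun_prop)
        · have h1 : HasCompactSupport (fun y : Fin n → ℝ => (η y : ℂ)) :=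
            hηc.comp_left (g := Complex.ofReal) Complex.ofReal_zero
          exact h1.mul_right
    _ = 0 := Finset.sum_eq_zero fun d _ => hterm d

open Metric in
/-- Iterated derivatives of `t ↦ ∫ η(y) f(x - t y) dy`. -/
private lemma core {n : ℕ} {f : (Fin n → ℝ) → ℂ} (hf : ContDiff ℝ (⊤ : ℕ∞) f)
    (hfc : HasCompactSupport f) {η : (Fin n → ℝ) → ℝ} (hηcont : Continuous η)
    (hηc : HasCompactSupport η) (hηs : Function.support η ⊆ Metric.ball 0 1)
    (x : Fin n → ℝ) :
    ∀ r : ℕ,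
      (iteratedDeriv r (fun t : ℝ => ∫ y : Fin n → ℝ, (η y : ℂ) * f (x - t • y))
        = fun t : ℝ => ∫ y : Fin n → ℝ,
            (η y : ℂ) * (iteratedFDeriv ℝ r f (x - t • y)) (fun _ => -y)) ∧
      ∀ t : ℝ, HasDerivAt
        (iteratedDeriv r (fun t : ℝ => ∫ y : Fin n → ℝ, (η y : ℂ) * f (x - t • y)))
        (iteratedDeriv (r + 1) (fun t : ℝ => ∫ y : Fin n → ℝ, (η y : ℂ) * f (x - t • y)) t)
        t := by
  have ptderiv : ∀ (r : ℕ) (t : ℝ) (y : Fin n → ℝ),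
      HasDerivAt (fun s : ℝ => (iteratedFDeriv ℝ r f (x - s • y)) (fun _ => -y))
        ((iteratedFDeriv ℝ (r + 1) f (x - t • y)) (fun _ => -y)) t := by
    intro r t y
    have hc : HasDerivAt (fun s : ℝ => x - s • y) (-y) t := by
      simpa using ((hasDerivAt_id t).smul_const y).const_sub x
    have hdM : DifferentiableAt ℝ (iteratedFDeriv ℝ r f) (x - t • y) :=
      (ContDiff.differentiable_iteratedFDeriv (by exact_mod_cast ENat.coe_lt_top r) hf)
        (x - t • y)
    have h1 : HasDerivAt (fun s : ℝ => iteratedFDeriv ℝ r f (x - s • y))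
        (fderiv ℝ (iteratedFDeriv ℝ r f) (x - t • y) (-y)) t :=
      hdM.hasFDerivAt.comp_hasDerivAt t hc
    have h2 := ((ContinuousMultilinearMap.apply ℝ (fun _ : Fin r => (Fin n → ℝ)) ℂ
        (fun _ => -y)).hasFDerivAt).comp_hasDerivAt t h1
    have h3 : (fderiv ℝ (iteratedFDeriv ℝ r f) (x - t • y) (-y))
          (fun _ : Fin r => -y)
        = (iteratedFDeriv ℝ (r + 1) f (x - t • y)) (fun _ : Fin (r + 1) => -y) := by
      rw [iteratedFDeriv_succ_apply_left]
      rfl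
    simpa only [ContinuousMultilinearMap.apply_apply, ContinuousLinearMap.coe_comp',
      Function.comp_def, h3] using h2
  have hcont : ∀ (r : ℕ) (t : ℝ), Continuous fun y : Fin n → ℝ =>
      (η y : ℂ) * (iteratedFDeriv ℝ r f (x - t • y)) (fun _ => -y) := by
    intro r t
    refine (Complex.continuous_ofReal.comp hηcont).mul ?_
    have h1 : Continuous fun y : Fin n → ℝ => iteratedFDeriv ℝ r f (x - t • y) :=
      (ContDiff.continuous_iteratedFDeriv (by exact_mod_cast le_top) hf).comp
        (continuous_const.sub (continuous_const_smul t))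
    have h2 : Continuous fun y : Fin n → ℝ => (fun _ : Fin r => -y) :=
      continuous_pi fun _ => continuous_neg
    exact continuous_eval.comp (h1.prodMk h2)
  have hηC : HasCompactSupport fun y : Fin n → ℝ => (η y : ℂ) :=
    hηc.comp_left (g := Complex.ofReal) Complex.ofReal_zero
  have hint : ∀ (r : ℕ) (t : ℝ), Integrable (fun y : Fin n → ℝ =>
      (η y : ℂ) * (iteratedFDeriv ℝ r f (x - t • y)) (fun _ => -y)) := fun r t =>
    (hcont r t).integrable_of_hasCompactSupport hηC.mul_right
  have hstep : ∀ (r : ℕ) (t : ℝ), HasDerivAt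
      (fun s : ℝ => ∫ y : Fin n → ℝ,
        (η y : ℂ) * (iteratedFDeriv ℝ r f (x - s • y)) (fun _ => -y))
      (∫ y : Fin n → ℝ, (η y : ℂ) * (iteratedFDeriv ℝ (r + 1) f (x - t • y)) (fun _ => -y))
      t := by
    intro r t
    obtain ⟨C, hC⟩ := (hfc.iteratedFDeriv (r + 1)).exists_bound_of_continuous
      (ContDiff.continuous_iteratedFDeriv (by exact_mod_cast le_top) hf)
    have hb : ∀ (t' : ℝ) (y : Fin n → ℝ),
        ‖(η y : ℂ) * (iteratedFDeriv ℝ (r + 1) f (x - t' • y)) (fun _ => -y)‖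
          ≤ C * ‖η y‖ := by
      intro t' y
      by_cases hy : η y = 0
      · simp [hy]
      · have hy1 : ‖y‖ ≤ 1 := le_of_lt (mem_ball_zero_iff.mp (hηs hy))
        have h1 : ‖(iteratedFDeriv ℝ (r + 1) f (x - t' • y)) (fun _ => -y)‖ ≤ C := by
          refine le_trans ((iteratedFDeriv ℝ (r + 1) f (x - t' • y)).le_opNorm _) ?_
          have h2 : (∏ _i : Fin (r + 1), ‖-y‖) = ‖y‖ ^ (r + 1) := by
            simp [Finset.prod_const]
          rw [h2]
          calc ‖iteratedFDeriv ℝ (r + 1) f (x - t' • y)‖ * ‖y‖ ^ (r + 1)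
              ≤ ‖iteratedFDeriv ℝ (r + 1) f (x - t' • y)‖ * 1 :=
                mul_le_mul_of_nonneg_left (pow_le_one₀ (norm_nonneg y) hy1) (norm_nonneg _)
            _ ≤ C := by rw [mul_one]; exact hC _
        rw [norm_mul, Complex.norm_real, mul_comm C ‖η y‖]
        exact mul_le_mul_of_nonneg_left h1 (norm_nonneg _)
    have key := hasDerivAt_integral_of_dominated_loc_of_deriv_le
      (F := fun (s : ℝ) (y : Fin n → ℝ) =>
        (η y : ℂ) * (iteratedFDeriv ℝ r f (x - s • y)) (fun _ => -y))
      (F' := fun (s : ℝ) (y : Fin n → ℝ) =>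
        (η y : ℂ) * (iteratedFDeriv ℝ (r + 1) f (x - s • y)) (fun _ => -y))
      (bound := fun y => C * ‖η y‖) (μ := volume) (x₀ := t) (Metric.ball_mem_nhds t one_pos)
      (Filter.Eventually.of_forall fun t' => (hcont r t').aestronglyMeasurable)
      (hint r t)
      ((hcont (r + 1) t).aestronglyMeasurable)
      (ae_of_all _ fun y t' _ => hb t' y)
      ((hηcont.norm.integrable_of_hasCompactSupport hηc.norm).const_mul C)
      (ae_of_all _ fun y t' _ => (ptderiv r t' y).const_mul ((η y : ℂ)))
    exact key.2
  have heq : ∀ r : ℕ,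
      iteratedDeriv r (fun t : ℝ => ∫ y : Fin n → ℝ, (η y : ℂ) * f (x - t • y))
        = fun t : ℝ => ∫ y : Fin n → ℝ,
            (η y : ℂ) * (iteratedFDeriv ℝ r f (x - t • y)) (fun _ => -y) := by
    intro r
    induction r with
    | zero =>
      rw [iteratedDeriv_zero]
      funext t
      simp [iteratedFDeriv_zero_apply]
    | succ r ih =>
      rw [iteratedDeriv_succ, ih]
      funext t
      exact (hstep r t).deriv
  exact fun r => ⟨heq r, fun t => by rw [heq r, heq (r + 1)]; exact hstep r t⟩

end Aux

set_option maxHeartbeats 1000000 in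
/-- With `f_j ∈ C_c^∞(ℝⁿ)` for `0 ≤ j ≤ m-1`, `η` supported in the
unit ball with `∫η = 1` and vanishing moments of orders `1 ≤ |ζ| ≤ m-1`, and
`H(x,t) = Σ_j (t^j/j!)(f_j ∗ η_t)(x) = Σ_j (t^j/j!) ∫ η(y) f_j(x - ty) dy`,
one has `lim_{t→0⁺} ∂_t^k H(x,t) = f_k(x)` for every `0 ≤ k ≤ m-1` and every `x`. -/
theorem stmt_14 (n m : ℕ) (hm : 1 ≤ m)
    (f : ℕ → (Fin n → ℝ) → ℂ)
    (hf : ∀ j < m, ContDiff ℝ (⊤ : ℕ∞) (f j) ∧ HasCompactSupport (f j))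
    (η : (Fin n → ℝ) → ℝ)
    (hη : ContDiff ℝ (⊤ : ℕ∞) η) (hηsupp : Function.support η ⊆ Metric.ball 0 1)
    (hηint : ∫ x, η x = 1)
    (hηmom : ∀ ζ : Fin n → ℕ, 1 ≤ ∑ i, ζ i → ∑ i, ζ i ≤ m - 1 →
      ∫ x, (∏ i, x i ^ ζ i) * η x = 0)
    (H : (Fin n → ℝ) → ℝ → ℂ)
    (hH : ∀ x t, H x t = ∑ j ∈ Finset.range m,
      ((t ^ j / (Nat.factorial j) : ℝ) : ℂ) * ∫ y, (η y : ℂ) * f j (x - t • y)) :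
    ∀ k < m, ∀ x : Fin n → ℝ,
      Filter.Tendsto (fun t => iteratedDeriv k (H x) t)
        (nhdsWithin 0 (Set.Ioi 0)) (nhds (f k x)) := by
  intro k hk x
  have hηcont : Continuous η := hη.continuous
  have hηc : HasCompactSupport η := by
    apply HasCompactSupport.intro (isCompact_closedBall (0 : Fin n → ℝ) 1)
    intro y hy
    by_contra h
    exact hy (Metric.ball_subset_closedBall (hηsupp h))
  set G : ℕ → ℝ → ℂ := fun j t => ∫ y : Fin n → ℝ, (η y : ℂ) * f j (x - t • y) with hGdef
  have hcore : ∀ j, j < m → ∀ r : ℕ,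
      (iteratedDeriv r (G j) = fun t : ℝ => ∫ y : Fin n → ℝ,
        (η y : ℂ) * (iteratedFDeriv ℝ r (f j) (x - t • y)) (fun _ => -y)) ∧
      ∀ t : ℝ, HasDerivAt (iteratedDeriv r (G j)) (iteratedDeriv (r + 1) (G j) t) t :=
    fun j hj => core ((hf j hj).1.of_le (by simp)) (hf j hj).2 hηcont hηc hηsupp x
  have hGsmooth : ∀ j, j < m → ContDiff ℝ (⊤ : ℕ∞) (G j) := fun j hj =>
    contDiff_of_differentiable_iteratedDeriv fun r _ =>
      fun t => ((hcore j hj r).2 t).differentiableAt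
  have hHx : H x = fun t : ℝ => ∑ j ∈ Finset.range m,
      ((Nat.factorial j : ℂ))⁻¹ * ((t : ℂ) ^ j * G j t) := by
    funext t
    rw [hH x t]
    refine Finset.sum_congr rfl fun j _ => ?_
    push_cast
    ring
  have hterm : ∀ j ∈ Finset.range m, ContDiff ℝ (⊤ : ℕ∞)
      (fun t : ℝ => ((Nat.factorial j : ℂ))⁻¹ * ((t : ℂ) ^ j * G j t)) := fun j hj =>
    contDiff_const.mul ((contDiff_ofRealC.pow j).mul (hGsmooth j (Finset.mem_range.mp hj)))
  have hHsmooth : ContDiff ℝ (⊤ : ℕ∞) (H x) := by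
    rw [hHx]; exact ContDiff.sum hterm
  -- the value of the k-th derivative at 0
  have hGk0 : G k 0 = f k x := by
    have h0 : G k 0 = ∫ y : Fin n → ℝ, (η y : ℂ) * f k x := by
      rw [hGdef]
      simp only [zero_smul, sub_zero]
    have hcast : (∫ y : Fin n → ℝ, ((η y : ℝ) : ℂ)) = Complex.ofReal (∫ y : Fin n → ℝ, η y) := by
      simpa only [Complex.ofRealCLM_apply] using Complex.ofRealCLM.integral_comp_comm
        (hηcont.integrable_of_hasCompactSupport hηc)
    rw [h0, integral_mul_const, hcast, hηint]
    simp
  have hGlt : ∀ j, j < k → iteratedDeriv (k - j) (G j) 0 = 0 := by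
    intro j hj
    have hjm : j < m := lt_trans hj hk
    rw [(hcore j hjm (k - j)).1]
    show (∫ y : Fin n → ℝ, (η y : ℂ)
      * (iteratedFDeriv ℝ (k - j) (f j) (x - (0 : ℝ) • y)) (fun _ => -y)) = 0
    simp only [zero_smul, sub_zero]
    refine moment_vanish hηcont hηc (fun ζ hζ => hηmom ζ ?_ ?_) _
    · rw [hζ]; omega
    · rw [hζ]; omega
  have hval : iteratedDeriv k (H x) 0 = f k x := by
    have h1 : iteratedDeriv k (H x) 0 = ∑ j ∈ Finset.range m,
        ((Nat.factorial j : ℂ))⁻¹ * iteratedDeriv k (fun t : ℝ => (t : ℂ) ^ j * G j t) 0 := by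
      rw [hHx, my_iteratedDeriv_sum _ _ hterm]
      show (∑ j ∈ Finset.range m, iteratedDeriv k
        (fun t : ℝ => ((Nat.factorial j : ℂ))⁻¹ * ((t : ℂ) ^ j * G j t)) 0) = _
      refine Finset.sum_congr rfl fun j hj => ?_
      rw [my_iteratedDeriv_const_mul _
        ((contDiff_ofRealC.pow j).mul (hGsmooth j (Finset.mem_range.mp hj)))]
    rw [h1, Finset.sum_eq_single_of_mem k (Finset.mem_range.mpr hk)]
    · rw [aux_pow_mul k (hGsmooth k hk) k, if_pos le_rfl, Nat.descFactorial_self,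
        Nat.sub_self, iteratedDeriv_zero, hGk0, ← mul_assoc,
        inv_mul_cancel₀ (by exact_mod_cast Nat.factorial_ne_zero k), one_mul]
    · intro j hj hne
      rw [aux_pow_mul j (hGsmooth j (Finset.mem_range.mp hj)) k]
      by_cases hjk : j ≤ k
      · rw [if_pos hjk, hGlt j (lt_of_le_of_ne hjk hne), mul_zero, mul_zero]
      · rw [if_neg hjk, mul_zero]
  have hcontIter : Continuous (iteratedDeriv k (H x)) :=
    hHsmooth.continuous_iteratedDeriv k (by exact_mod_cast le_top)
  rw [← hval]
  exact hcontIter.continuousWithinAt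
end

section
/- Let Q ⊂ ℝⁿ be a cube, s ≤ t, and let Q' = Q'(x) denote the dyadic subcube of Q containing x with t ≤ ℓ(Q') < 2t. Let η = η_{t,s,x} be a smooth cutoff with 1_{Q'} ≤ η ≤ 1_{(1+√(s/t))Q'} and ‖∇η‖_∞ ≤ C/√(st), and set B^Q_{t,s}G(x) = |Q'|^{−1}∫ η G. Then for every G ∈ L^{3/2}_{loc}(ℝⁿ), |A_t^Q G(x) − B^Q_{t,s} G(x)| ≤ C (s/t)^{1/6} [M(|G|^{3/2})(x)]^{2/3}, where A_t^Q G(x) = ⨍_{Q'} G and M is the Hardy–Littlewood maximal operator. -/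
open MeasureTheory Set
open scoped ENNReal NNReal

private lemma cube_eq_Icc (n : ℕ) (c : Fin n → ℝ) (M : ℝ) :
    {y : Fin n → ℝ | ∀ i, |y i - c i| ≤ M} =
      Set.Icc (fun i => c i - M) (fun i => c i + M) := by
  ext y
  simp only [Set.mem_setOf_eq, Set.mem_Icc, Pi.le_def, abs_le]
  constructor
  · intro h; exact ⟨fun i => by linarith [(h i).1], fun i => by linarith [(h i).2]⟩
  · intro h i; exact ⟨by linarith [h.1 i], by linarith [h.2 i]⟩

private lemma cube_vol (n : ℕ) (c : Fin n → ℝ) (M : ℝ) (hM : 0 ≤ M) :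
    volume {y : Fin n → ℝ | ∀ i, |y i - c i| ≤ M} = ENNReal.ofReal ((2*M)^n) := by
  rw [cube_eq_Icc, Real.volume_Icc_pi]
  have h2 : ∀ i : Fin n, (fun i => c i + M) i - (fun i => c i - M) i = 2*M := fun i => by
    simp; ring
  simp only [h2]
  rw [Finset.prod_const, Finset.card_univ, Fintype.card_fin,
    ← ENNReal.ofReal_pow (by linarith)]

private lemma pow_one_add_le (n : ℕ) : ∀ δ : ℝ, 0 ≤ δ → δ ≤ 1 →
    (1+δ)^n ≤ 1 + (2^n - 1)*δ := by
  induction n with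
  | zero => intro δ h0 h1; norm_num
  | succ m ih =>
    intro δ h0 h1
    have h := ih δ h0 h1
    have h2 : (1:ℝ) ≤ 2^m := one_le_pow₀ (by norm_num)
    have h3 : (0:ℝ) ≤ (1+δ)^m := by positivity
    rw [pow_succ]
    have h4 : (2:ℝ)^(m+1) = 2 * 2^m := by rw [pow_succ]; ring
    rw [h4]
    nlinarith [mul_le_mul_of_nonneg_right h (by linarith : (0:ℝ) ≤ 1+δ),
      mul_nonneg (mul_nonneg (by linarith : (0:ℝ) ≤ 2^m - 1) h0) (by linarith : (0:ℝ) ≤ 1 - δ)]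

/-- Let `Q'` be a cube of side `ℓ(Q') ∈ [t, 2t)` containing `x`
(the dyadic subcube at scale `t`), `s ≤ t`, and let `η` be a smooth cutoff with
`1_{Q'} ≤ η ≤ 1_{(1+√(s/t))Q'}` and `‖∇η‖_∞ ≤ C₂/√(st)`.  With
`A_t^Q G(x) = ⨍_{Q'} G` and `B_{t,s}^Q G(x) = |Q'|⁻¹ ∫ η G`, one has
`|A_t^Q G(x) − B_{t,s}^Q G(x)| ≤ C (s/t)^{1/6} [M(|G|^{3/2})(x)]^{2/3}` for every
`G ∈ L^{3/2}_loc`, with `C = C(n)`. -/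
theorem stmt_17 (n : ℕ) :
    ∃ C : ℝ, 0 < C ∧
      ∀ (s t : ℝ) (c' : Fin n → ℝ) (L' : ℝ) (x : Fin n → ℝ)
        (η : (Fin n → ℝ) → ℝ) (C₂ : ℝ) (G : (Fin n → ℝ) → ℂ),
        0 < s → s ≤ t → t ≤ L' → L' < 2 * t →
        x ∈ {y : Fin n → ℝ | ∀ i, |y i - c' i| ≤ L' / 2} →
        ContDiff ℝ (⊤ : ℕ∞) η →
        (∀ y, 0 ≤ η y ∧ η y ≤ 1) →
        (∀ y ∈ {y : Fin n → ℝ | ∀ i, |y i - c' i| ≤ L' / 2}, η y = 1) →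
        (∀ y, y ∉ {y : Fin n → ℝ | ∀ i,
            |y i - c' i| ≤ (1 + Real.sqrt (s / t)) * L' / 2} → η y = 0) →
        (∀ y, ‖fderiv ℝ η y‖ ≤ C₂ / Real.sqrt (s * t)) →
        LocallyIntegrable G volume →
        LocallyIntegrable (fun y => ‖G y‖ ^ (3 / 2 : ℝ)) volume →
        ENNReal.ofReal
            ‖(⨍ y in {y : Fin n → ℝ | ∀ i, |y i - c' i| ≤ L' / 2}, G y) -
              (volume {y : Fin n → ℝ | ∀ i, |y i - c' i| ≤ L' / 2}).toReal⁻¹ •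
                ∫ y, η y • G y‖ ≤
          ENNReal.ofReal (C * (s / t) ^ (1 / 6 : ℝ)) *
            (⨆ (r : ℝ) (_ : 0 < r),
              (∫⁻ y in Metric.ball x r, ENNReal.ofReal (‖G y‖ ^ (3 / 2 : ℝ))) /
                volume (Metric.ball x r)) ^ (2 / 3 : ℝ) := by
  refine ⟨(8:ℝ)^n + 1, by positivity, ?_⟩
  intro s t c' L' x η C₂ G hs hst htL hL2t hx hsm hη01 hη1 hη0 hη' hG hG32
  have ht : 0 < t := lt_of_lt_of_le hs hst
  have hL : 0 < L' := lt_of_lt_of_le ht htL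
  set δ : ℝ := Real.sqrt (s / t) with hδdef
  have hδ0 : 0 ≤ δ := Real.sqrt_nonneg _
  have hst' : (0:ℝ) ≤ s / t := by positivity
  have hδ1 : δ ≤ 1 := by
    rw [hδdef, show (1:ℝ) = Real.sqrt 1 by simp]
    exact Real.sqrt_le_sqrt (by rw [div_le_one ht]; exact hst)
  set Q : Set (Fin n → ℝ) := {y | ∀ i, |y i - c' i| ≤ L' / 2} with hQdef
  set R : Set (Fin n → ℝ) := {y | ∀ i, |y i - c' i| ≤ (1 + δ) * L' / 2} with hRdef
  set S : ℝ≥0∞ := ⨆ (r : ℝ) (_ : 0 < r),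
      (∫⁻ y in Metric.ball x r, ENNReal.ofReal (‖G y‖ ^ (3 / 2 : ℝ))) /
        volume (Metric.ball x r) with hSdef
  have hQR : Q ⊆ R := by
    intro y hy i
    refine le_trans (hy i) ?_
    nlinarith [hδ0, hL.le]
  have hQIcc := cube_eq_Icc n c' (L' / 2)
  have hRIcc := cube_eq_Icc n c' ((1 + δ) * L' / 2)
  have hQm : MeasurableSet Q := by rw [hQdef, hQIcc]; exact measurableSet_Icc
  have hRm : MeasurableSet R := by rw [hRdef, hRIcc]; exact measurableSet_Icc
  have hQc : IsCompact Q := by rw [hQdef, hQIcc]; exact isCompact_Icc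
  have hRc : IsCompact R := by rw [hRdef, hRIcc]; exact isCompact_Icc
  set A : Set (Fin n → ℝ) := R \ Q with hAdef
  have hAm : MeasurableSet A := hRm.diff hQm
  have hVQ : volume Q = ENNReal.ofReal (L' ^ n) := by
    rw [hQdef, cube_vol n c' (L' / 2) (by positivity), show 2 * (L' / 2) = L' by ring]
  have hVR : volume R = ENNReal.ofReal (((1 + δ) * L') ^ n) := by
    rw [hRdef, cube_vol n c' ((1 + δ) * L' / 2) (by positivity),
      show 2 * ((1 + δ) * L' / 2) = (1 + δ) * L' by ring]
  have hVQne : volume Q ≠ ∞ := by rw [hVQ]; exact ENNReal.ofReal_ne_top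
  have hVA : volume A ≤ ENNReal.ofReal ((2 ^ n - 1) * L' ^ n * δ) := by
    rw [hAdef, measure_diff hQR hQm.nullMeasurableSet hVQne, hVR, hVQ,
      ← ENNReal.ofReal_sub _ (by positivity)]
    apply ENNReal.ofReal_le_ofReal
    have h1 := pow_one_add_le n δ hδ0 hδ1
    have h2 : ((1 + δ) * L') ^ n = (1 + δ) ^ n * L' ^ n := mul_pow _ _ _
    have hLn : (0:ℝ) ≤ L' ^ n := by positivity
    nlinarith [mul_le_mul_of_nonneg_right h1 hLn]
  -- integrability
  have hηc : Continuous η := hsm.continuous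
  have hηsupp : HasCompactSupport η := HasCompactSupport.intro hRc (fun y hy => hη0 y hy)
  have hI2 : Integrable (fun y => η y • G y) volume :=
    hG.integrable_smul_left_of_hasCompactSupport hηc hηsupp
  have hI1 : IntegrableOn G Q volume := hG.integrableOn_isCompact hQc
  have hind : Integrable (Q.indicator G) volume := (integrable_indicator_iff hQm).2 hI1
  -- step 1 : reduce to lintegral over A
  have htoReal : (volume Q).toReal = L' ^ n := by
    rw [hVQ, ENNReal.toReal_ofReal (by positivity)]
  have hdiff : (∫ y in Q, G y) - ∫ y, η y • G y
      = ∫ y, (Q.indicator G y - η y • G y) := by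
    rw [integral_sub hind hI2, integral_indicator hQm]
  have hstep : ENNReal.ofReal ‖∫ y, (Q.indicator G y - η y • G y)‖
      ≤ ∫⁻ y in A, (‖G y‖₊ : ℝ≥0∞) := by
    rw [ofReal_norm]
    refine le_trans (enorm_integral_le_lintegral_enorm _) ?_
    rw [← lintegral_indicator hAm]
    refine lintegral_mono fun y => ?_
    by_cases hyQ : y ∈ Q
    · simp [Set.indicator_of_mem hyQ, hη1 y hyQ]
    by_cases hyR : y ∈ R
    · have hyA : y ∈ A := ⟨hyR, hyQ⟩
      rw [Set.indicator_of_notMem hyQ, Set.indicator_of_mem hyA]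
      have hb : ‖(0:ℂ) - η y • G y‖ ≤ ‖G y‖ := by
        rw [zero_sub, norm_neg, norm_smul, Real.norm_eq_abs,
          abs_of_nonneg (hη01 y).1]
        calc η y * ‖G y‖ ≤ 1 * ‖G y‖ :=
              mul_le_mul_of_nonneg_right (hη01 y).2 (norm_nonneg _)
          _ = ‖G y‖ := one_mul _
      exact ENNReal.coe_le_coe.2 (by rwa [← NNReal.coe_le_coe, coe_nnnorm, coe_nnnorm])
    · have : y ∉ Q := fun h => hyQ h
      rw [Set.indicator_of_notMem hyQ, hη0 y hyR]
      simp
  -- step 2 : Hölder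
  have hconj : (3/2 : ℝ).HolderConjugate 3 := Real.holderConjugate_iff.mpr ⟨by norm_num, by norm_num⟩
  have hGm : AEMeasurable (fun y => (‖G y‖₊ : ℝ≥0∞)) volume :=
    hG.aestronglyMeasurable.enorm
  have hHolder : (∫⁻ y in A, (‖G y‖₊ : ℝ≥0∞))
      ≤ (∫⁻ y in A, (‖G y‖₊ : ℝ≥0∞) ^ (3/2 : ℝ)) ^ (2/3 : ℝ) * (volume A) ^ (1/3 : ℝ) := by
    have h := ENNReal.lintegral_mul_le_Lp_mul_Lq volume hconj
      (hGm.indicator hAm) ((aemeasurable_const (b := (1:ℝ≥0∞))).indicator hAm)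
    have e1 : ∀ y, (A.indicator (fun y => (‖G y‖₊ : ℝ≥0∞)) *
        A.indicator fun _ => (1:ℝ≥0∞)) y = A.indicator (fun y => (‖G y‖₊ : ℝ≥0∞)) y := by
      intro y; by_cases hy : y ∈ A <;> simp [hy]
    have e2 : ∀ y, (A.indicator (fun y => (‖G y‖₊ : ℝ≥0∞)) y) ^ (3/2 : ℝ)
        = A.indicator (fun y => (‖G y‖₊ : ℝ≥0∞) ^ (3/2 : ℝ)) y := by
      intro y; by_cases hy : y ∈ A <;>
        simp [hy, ENNReal.zero_rpow_of_pos (by norm_num : (0:ℝ) < 3/2)]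
    have e3 : ∀ y, (A.indicator (fun _ => (1:ℝ≥0∞)) y) ^ (3 : ℝ)
        = A.indicator (fun _ => (1:ℝ≥0∞)) y := by
      intro y; by_cases hy : y ∈ A <;> simp [hy]
    simp only [e1, e2, e3] at h
    rw [lintegral_indicator hAm, lintegral_indicator hAm, lintegral_indicator hAm,
      setLIntegral_one] at h
    convert h using 2 <;> norm_num
  -- step 3 : maximal function bound
  set r0 : ℝ := 2 * L' with hr0def
  have hr0 : 0 < r0 := by positivity
  have hRball : R ⊆ Metric.ball x r0 := by
    intro y hy
    rw [Metric.mem_ball]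
    refine (dist_pi_lt_iff hr0).2 fun i => ?_
    rw [Real.dist_eq]
    have h1 := hy i
    have h2 := hx i
    have h3 : |y i - x i| ≤ |y i - c' i| + |c' i - x i| := abs_sub_le _ _ _
    have h3' : |c' i - x i| = |x i - c' i| := abs_sub_comm _ _
    rw [h3'] at h3
    have h4 : (1 + δ) * L' / 2 ≤ L' := by nlinarith [hL.le]
    calc |y i - x i| ≤ L' + L' / 2 := by linarith
      _ < 2 * L' := by linarith
  have hball_vol : volume (Metric.ball x r0) = ENNReal.ofReal ((2 * r0) ^ n) := by
    rw [Real.volume_pi_ball x hr0, Fintype.card_fin]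
  have hmax : (∫⁻ y in A, (‖G y‖₊ : ℝ≥0∞) ^ (3/2 : ℝ))
      ≤ S * ENNReal.ofReal ((4 * L') ^ n) := by
    have e4 : ∀ y, (‖G y‖₊ : ℝ≥0∞) ^ (3/2 : ℝ) = ENNReal.ofReal (‖G y‖ ^ (3/2 : ℝ)) := by
      intro y
      rw [← enorm_eq_nnnorm, ← ofReal_norm,
        ENNReal.ofReal_rpow_of_nonneg (norm_nonneg _) (by norm_num)]
    simp only [e4]
    have hsub : (∫⁻ y in A, ENNReal.ofReal (‖G y‖ ^ (3/2 : ℝ)))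
        ≤ ∫⁻ y in Metric.ball x r0, ENNReal.ofReal (‖G y‖ ^ (3/2 : ℝ)) :=
      lintegral_mono_set (fun y hy => hRball hy.1)
    have hSle : (∫⁻ y in Metric.ball x r0, ENNReal.ofReal (‖G y‖ ^ (3/2 : ℝ))) /
        volume (Metric.ball x r0) ≤ S := by
      rw [hSdef]
      exact le_iSup_of_le r0 (le_iSup_of_le hr0 le_rfl)
    have hb0 : volume (Metric.ball x r0) ≠ 0 := by
      rw [hball_vol]
      simp only [ne_eq, ENNReal.ofReal_eq_zero, not_le]
      positivity
    have hbt : volume (Metric.ball x r0) ≠ ∞ := by rw [hball_vol]; exact ENNReal.ofReal_ne_top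
    have := (ENNReal.div_le_iff hb0 hbt).1 hSle
    refine le_trans hsub (le_trans this ?_)
    rw [hball_vol, show 2 * r0 = 4 * L' by rw [hr0def]; ring]
  -- assemble
  rw [setAverage_eq, measureReal_def, ← smul_sub, norm_smul, Real.norm_eq_abs,
    abs_of_nonneg (inv_nonneg.2 ENNReal.toReal_nonneg), htoReal,
    ENNReal.ofReal_mul (by positivity)]
  have chain : ENNReal.ofReal ‖(∫ y in Q, G y) - ∫ y, η y • G y‖
      ≤ (S * ENNReal.ofReal ((4 * L') ^ n)) ^ (2/3 : ℝ) *
        (ENNReal.ofReal ((2 ^ n - 1) * L' ^ n * δ)) ^ (1/3 : ℝ) := by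
    rw [hdiff]
    refine le_trans hstep (le_trans hHolder ?_)
    exact mul_le_mul' (ENNReal.rpow_le_rpow hmax (by norm_num))
      (ENNReal.rpow_le_rpow hVA (by norm_num))
  refine le_trans (mul_le_mul_right chain _) ?_
  rw [ENNReal.mul_rpow_of_nonneg _ _ (by norm_num : (0:ℝ) ≤ 2/3)]
  -- now everything except S^(2/3) is ofReal of reals
  have h2n : (0:ℝ) ≤ 2 ^ n - 1 := by
    have : (1:ℝ) ≤ 2 ^ n := one_le_pow₀ (by norm_num)
    linarith
  have hbase : (0:ℝ) ≤ (2 ^ n - 1) * L' ^ n * δ :=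
    mul_nonneg (mul_nonneg h2n (by positivity)) hδ0
  rw [ENNReal.ofReal_rpow_of_nonneg (by positivity) (by norm_num : (0:ℝ) ≤ 2/3),
    ENNReal.ofReal_rpow_of_nonneg hbase (by norm_num : (0:ℝ) ≤ 1/3)]
  have final : ENNReal.ofReal (L' ^ n)⁻¹ *
      (S ^ (2/3 : ℝ) * ENNReal.ofReal (((4 * L') ^ n) ^ (2/3 : ℝ)) *
        ENNReal.ofReal (((2 ^ n - 1) * L' ^ n * δ) ^ (1/3 : ℝ)))
      = S ^ (2/3 : ℝ) * ENNReal.ofReal ((L' ^ n)⁻¹ * ((4 * L') ^ n) ^ (2/3 : ℝ) *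
          ((2 ^ n - 1) * L' ^ n * δ) ^ (1/3 : ℝ)) := by
    rw [ENNReal.ofReal_mul (by positivity), ENNReal.ofReal_mul (by positivity)]
    ring
  rw [final]
  have hreal : (L' ^ n)⁻¹ * ((4 * L') ^ n) ^ (2/3 : ℝ) *
      ((2 ^ n - 1) * L' ^ n * δ) ^ (1/3 : ℝ)
      ≤ ((8:ℝ) ^ n + 1) * (s / t) ^ (1/6 : ℝ) := by
    set p : ℝ := L' ^ n with hpdef
    have hp : 0 < p := by positivity
    have e5 : ((4 * L') ^ n : ℝ) ^ (2/3 : ℝ) = ((4:ℝ) ^ n) ^ (2/3 : ℝ) * p ^ (2/3 : ℝ) := by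
      rw [mul_pow, Real.mul_rpow (by positivity) hp.le]
    have e6 : ((2 ^ n - 1) * p * δ) ^ (1/3 : ℝ)
        = ((2:ℝ) ^ n - 1) ^ (1/3 : ℝ) * p ^ (1/3 : ℝ) * δ ^ (1/3 : ℝ) := by
      rw [Real.mul_rpow (mul_nonneg h2n hp.le) hδ0, Real.mul_rpow h2n hp.le]
    rw [e5, e6]
    have e7 : p ^ (2/3 : ℝ) * p ^ (1/3 : ℝ) = p := by
      rw [← Real.rpow_add hp]; norm_num
    have e8 : δ ^ (1/3 : ℝ) = (s / t) ^ (1/6 : ℝ) := by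
      rw [hδdef, Real.sqrt_eq_rpow, ← Real.rpow_mul hst']
      norm_num
    have e9 : ((4:ℝ) ^ n) ^ (2/3 : ℝ) ≤ (4:ℝ) ^ n := by
      calc ((4:ℝ) ^ n) ^ (2/3 : ℝ) ≤ ((4:ℝ) ^ n) ^ (1 : ℝ) :=
            Real.rpow_le_rpow_of_exponent_le (one_le_pow₀ (by norm_num)) (by norm_num)
        _ = (4:ℝ) ^ n := Real.rpow_one _
    have e10 : ((2:ℝ) ^ n - 1) ^ (1/3 : ℝ) ≤ (2:ℝ) ^ n := by
      calc ((2:ℝ) ^ n - 1) ^ (1/3 : ℝ) ≤ ((2:ℝ) ^ n) ^ (1/3 : ℝ) :=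
            Real.rpow_le_rpow h2n (by linarith) (by norm_num)
        _ ≤ ((2:ℝ) ^ n) ^ (1 : ℝ) :=
            Real.rpow_le_rpow_of_exponent_le (one_le_pow₀ (by norm_num)) (by norm_num)
        _ = (2:ℝ) ^ n := Real.rpow_one _
    calc p⁻¹ * (((4:ℝ) ^ n) ^ (2/3 : ℝ) * p ^ (2/3 : ℝ)) *
          (((2:ℝ) ^ n - 1) ^ (1/3 : ℝ) * p ^ (1/3 : ℝ) * δ ^ (1/3 : ℝ))
        = ((4:ℝ) ^ n) ^ (2/3 : ℝ) * ((2:ℝ) ^ n - 1) ^ (1/3 : ℝ) * δ ^ (1/3 : ℝ) *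
            (p⁻¹ * (p ^ (2/3 : ℝ) * p ^ (1/3 : ℝ))) := by ring
      _ = ((4:ℝ) ^ n) ^ (2/3 : ℝ) * ((2:ℝ) ^ n - 1) ^ (1/3 : ℝ) * δ ^ (1/3 : ℝ) := by
          rw [e7, inv_mul_cancel₀ hp.ne', mul_one]
      _ ≤ ((4:ℝ) ^ n * (2:ℝ) ^ n) * δ ^ (1/3 : ℝ) := by
          have hd3 : (0:ℝ) ≤ δ ^ (1/3 : ℝ) := Real.rpow_nonneg hδ0 _
          have := mul_le_mul e9 e10 (Real.rpow_nonneg h2n _) (by positivity)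
          exact mul_le_mul_of_nonneg_right this hd3
      _ ≤ ((8:ℝ) ^ n + 1) * (s / t) ^ (1/6 : ℝ) := by
          rw [e8, ← mul_pow]
          refine mul_le_mul_of_nonneg_right ?_ (Real.rpow_nonneg hst' _)
          norm_num
  refine le_trans (mul_le_mul_right (ENNReal.ofReal_le_ofReal hreal) _)
    (le_of_eq (mul_comm _ _))
end
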